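/- arXiv:2405.12112 — 6 statements merged into one kernel-verified Lean document; each statement's English description precedes it below -/
import Mathlib

section
/- Let d ≥ 1. Every symplectic matrix 𝒜 ∈ Sp(2d,ℝ) can be factored as 𝒜 = V_Q · D_L · R_U with Q ∈ ℝ^{d×d} symmetric, L ∈ ℝ^{d×d} invertible, and U ∈ U(d,ℂ) unitary (pre-Iwasawa decomposition). Moreover, there is exactly one such factorization in which L is in addition symmetric and positive definite. -/
/-!
For symplectic `𝒜 = [[A, B], [C, D]]`, the matrix `P = AAᵀ + BBᵀ` is a principal block of the
positive definite `𝒜𝒜ᵀ`, and `ABᵀ` is symmetric. With `L = √P`, the row `L⁻¹ [A B]` is the top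
row of `R_U` for a unitary `U`, so `𝒜 R_Uᵀ` is symplectic and block lower triangular with top
left block `L`; such matrices are exactly the products `V_Q D_L` with `Q` symmetric.
Conversely the top row of `V_Q D_L R_U` is `L [Re U, Im U]`, so `L² = P` pins down `L`, hence
`U`, hence `Q`.
-/

open Matrix

namespace Matrix

section RealBlock

variable {n : Type*}

/-- The matrix `R_U`. -/
def realBlock (U : Matrix n n ℂ) : Matrix (n ⊕ n) (n ⊕ n) ℝ :=
  fromBlocks (U.map Complex.re) (U.map Complex.im) (-(U.map Complex.im)) (U.map Complex.re)

def ofReIm (X Y : Matrix n n ℝ) : Matrix n n ℂ :=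
  of fun i j => ⟨X i j, Y i j⟩

lemma realBlock_ofReIm (X Y : Matrix n n ℝ) : realBlock (ofReIm X Y) = fromBlocks X Y (-Y) X :=
  rfl

lemma realBlock_injective : Function.Injective (realBlock : Matrix n n ℂ → _) := by
  intro U V h
  obtain ⟨hre, him, -, -⟩ := fromBlocks_inj.mp h
  ext i j
  exact Complex.ext (congrFun₂ hre i j) (congrFun₂ him i j)

lemma realBlock_conjTranspose (U : Matrix n n ℂ) : realBlock Uᴴ = (realBlock U)ᵀ := by
  ext (i | i) (j | j) <;> simp [realBlock]

lemma realBlock_one [DecidableEq n] : realBlock (1 : Matrix n n ℂ) = 1 := by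
  rw [realBlock, ← fromBlocks_one]
  congr 1 <;> ext i j <;> by_cases h : i = j <;> simp [one_apply, h]

variable [Fintype n]

lemma map_re_mul (U V : Matrix n n ℂ) :
    (U * V).map Complex.re =
      U.map Complex.re * V.map Complex.re - U.map Complex.im * V.map Complex.im := by
  ext i j
  simp [mul_apply, Complex.re_sum, Finset.sum_sub_distrib]

lemma map_im_mul (U V : Matrix n n ℂ) :
    (U * V).map Complex.im =
      U.map Complex.re * V.map Complex.im + U.map Complex.im * V.map Complex.re := by
  ext i j
  simp [mul_apply, Complex.im_sum, Finset.sum_add_distrib]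

lemma realBlock_mul (U V : Matrix n n ℂ) : realBlock (U * V) = realBlock U * realBlock V := by
  simp only [realBlock, fromBlocks_multiply, map_re_mul, map_im_mul]
  congr 1 <;> noncomm_ring

variable [DecidableEq n]

lemma mem_unitaryGroup_iff_realBlock_mul_transpose {U : Matrix n n ℂ} :
    U ∈ unitaryGroup n ℂ ↔ realBlock U * (realBlock U)ᵀ = 1 := by
  rw [mem_unitaryGroup_iff, star_eq_conjTranspose, ← realBlock_conjTranspose, ← realBlock_mul,
    ← realBlock_one, realBlock_injective.eq_iff]

lemma map_re_mul_transpose_add_map_im_mul_transpose {U : Matrix n n ℂ}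
    (hU : U ∈ unitaryGroup n ℂ) :
    U.map Complex.re * (U.map Complex.re)ᵀ + U.map Complex.im * (U.map Complex.im)ᵀ = 1 := by
  have h := mem_unitaryGroup_iff_realBlock_mul_transpose.mp hU
  rw [realBlock, fromBlocks_transpose, fromBlocks_multiply, ← fromBlocks_one] at h
  simpa using (fromBlocks_inj.mp h).1

lemma ofReIm_mem_unitaryGroup {X Y : Matrix n n ℝ} (h₁ : X * Xᵀ + Y * Yᵀ = 1)
    (h₂ : X * Yᵀ = Y * Xᵀ) : ofReIm X Y ∈ unitaryGroup n ℂ := by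
  rw [mem_unitaryGroup_iff_realBlock_mul_transpose, realBlock_ofReIm, fromBlocks_transpose,
    fromBlocks_multiply, ← fromBlocks_one]
  simp only [transpose_neg, mul_neg, neg_mul, neg_neg, h₂, neg_add_cancel, add_comm (Y * Yᵀ), h₁]

lemma realBlock_mul_J (U : Matrix n n ℂ) : realBlock U * J n ℝ = J n ℝ * realBlock U := by
  simp [realBlock, J, fromBlocks_multiply]

lemma realBlock_mem_symplecticGroup {U : Matrix n n ℂ} (hU : U ∈ unitaryGroup n ℂ) :
    realBlock U ∈ symplecticGroup n ℝ := by
  rw [SymplecticGroup.mem_iff, realBlock_mul_J, Matrix.mul_assoc,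
    mem_unitaryGroup_iff_realBlock_mul_transpose.mp hU, Matrix.mul_one]

end RealBlock

variable {n : Type*} [Fintype n] [DecidableEq n]

lemma exists_shear_of_lowerTriangular_mem_symplecticGroup {R : Type*} [CommRing R]
    {L C D : Matrix n n R} (h : fromBlocks L 0 C D ∈ symplecticGroup n R) :
    ∃ Q : Matrix n n R, Qᵀ = Q ∧
      fromBlocks L 0 C D = fromBlocks 1 0 Q 1 * fromBlocks L 0 0 L⁻¹ᵀ := by
  obtain ⟨hLC, -, hLD⟩ := SymplecticGroup.fromBlocks_mem_iff.mp h
  rw [Matrix.mul_zero, sub_zero] at hLD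
  have hL : IsUnit L.det := by
    simpa using isUnit_det_of_right_inverse hLD
  have hD : D = L⁻¹ᵀ := by
    rw [transpose_nonsing_inv, inv_eq_right_inv hLD]
  refine ⟨C * L⁻¹, ?_, ?_⟩
  · calc (C * L⁻¹)ᵀ = L⁻¹ᵀ * (Cᵀ * L) * L⁻¹ := by
          rw [Matrix.mul_assoc, mul_nonsing_inv_cancel_right _ _ hL, transpose_mul]
      _ = C * L⁻¹ := by
          rw [← hLC, transpose_nonsing_inv, ← Matrix.mul_assoc,
            nonsing_inv_mul _ (by simpa using hL), Matrix.one_mul]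
  · rw [fromBlocks_multiply, hD]
    simp [Matrix.mul_assoc, nonsing_inv_mul _ hL]

lemma posDef_mul_transpose_add_mul_transpose {A B C D : Matrix n n ℝ}
    (h : IsUnit (fromBlocks A B C D)) : (A * Aᵀ + B * Bᵀ).PosDef := by
  have hpos : (fromBlocks A B C D * (fromBlocks A B C D)ᴴ).PosDef :=
    .mul_conjTranspose_self _ (vecMul_injective_iff_isUnit.mpr h)
  have hblock := hpos.submatrix Sum.inl_injective
  rw [conjTranspose_eq_transpose_of_trivial, fromBlocks_transpose, fromBlocks_multiply] at hblock
  exact hblock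

open scoped MatrixOrder in
lemma exists_posDef_mul_eq_of_posDef_mul_transpose_add {A B : Matrix n n ℝ}
    (hP : (A * Aᵀ + B * Bᵀ).PosDef) (hAB : A * Bᵀ = B * Aᵀ) :
    ∃ L X Y : Matrix n n ℝ, L.PosDef ∧ X * Xᵀ + Y * Yᵀ = 1 ∧ X * Yᵀ = Y * Xᵀ ∧
      L * X = A ∧ L * Y = B := by
  set L := CFC.sqrt (A * Aᵀ + B * Bᵀ)
  have hL : L.PosDef := (IsStrictlyPositive.sqrt _ hP.isStrictlyPositive).posDef
  have hLL : L * L = A * Aᵀ + B * Bᵀ := CFC.sqrt_mul_sqrt_self _ hP.posSemidef.nonneg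
  have hLdet : IsUnit L.det := (isUnit_iff_isUnit_det L).mp hL.isUnit
  have hLt : L⁻¹ᵀ = L⁻¹ := by
    rw [transpose_nonsing_inv, ← conjTranspose_eq_transpose_of_trivial, hL.isHermitian.eq]
  refine ⟨L, L⁻¹ * A, L⁻¹ * B, hL, ?_, ?_, mul_nonsing_inv_cancel_left _ _ hLdet,
    mul_nonsing_inv_cancel_left _ _ hLdet⟩
  · calc L⁻¹ * A * (L⁻¹ * A)ᵀ + L⁻¹ * B * (L⁻¹ * B)ᵀ = L⁻¹ * (L * L) * L⁻¹ := by
          rw [hLL, transpose_mul, transpose_mul, hLt]; noncomm_ring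
      _ = 1 := by
          rw [← Matrix.mul_assoc, nonsing_inv_mul _ hLdet, Matrix.one_mul, mul_nonsing_inv _ hLdet]
  · simp only [transpose_mul, hLt, Matrix.mul_assoc]
    rw [← Matrix.mul_assoc A, ← Matrix.mul_assoc B, hAB]

lemma fromBlocks_mul_realBlock_ofReIm_transpose {L X Y C D : Matrix n n ℝ}
    (h₁ : X * Xᵀ + Y * Yᵀ = 1) (h₂ : X * Yᵀ = Y * Xᵀ) :
    fromBlocks (L * X) (L * Y) C D * (realBlock (ofReIm X Y))ᵀ =
      fromBlocks L 0 (C * Xᵀ + D * Yᵀ) (D * Xᵀ - C * Yᵀ) := by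
  rw [realBlock_ofReIm, fromBlocks_transpose, fromBlocks_multiply]
  congr 1
  · rw [Matrix.mul_assoc, Matrix.mul_assoc, ← Matrix.mul_add, h₁, Matrix.mul_one]
  · rw [transpose_neg, Matrix.mul_neg, Matrix.mul_assoc, Matrix.mul_assoc, h₂, neg_add_cancel]
  · rw [transpose_neg, Matrix.mul_neg, neg_add_eq_sub]

lemma exists_preIwasawa_of_mem_symplecticGroup {𝒜 : Matrix (n ⊕ n) (n ⊕ n) ℝ}
    (h𝒜 : 𝒜 ∈ symplecticGroup n ℝ) :
    ∃ (Q L : Matrix n n ℝ) (U : Matrix n n ℂ), Qᵀ = Q ∧ L.PosDef ∧ U ∈ unitaryGroup n ℂ ∧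
      𝒜 = fromBlocks 1 0 Q 1 * fromBlocks L 0 0 L⁻¹ᵀ * realBlock U := by
  obtain ⟨A, B, C, D, rfl⟩ : ∃ A B C D, 𝒜 = fromBlocks A B C D :=
    ⟨_, _, _, _, (fromBlocks_toBlocks 𝒜).symm⟩
  have hAB : A * Bᵀ = B * Aᵀ := by
    have hT := SymplecticGroup.transpose_mem h𝒜
    rw [fromBlocks_transpose, SymplecticGroup.fromBlocks_mem_iff, transpose_transpose,
      transpose_transpose] at hT
    exact hT.1
  have hP := posDef_mul_transpose_add_mul_transpose
    ((isUnit_iff_isUnit_det _).mpr (SymplecticGroup.symplectic_det h𝒜))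
  obtain ⟨L, X, Y, hL, h₁, h₂, rfl, rfl⟩ := exists_posDef_mul_eq_of_posDef_mul_transpose_add hP hAB
  have hU := ofReIm_mem_unitaryGroup h₁ h₂
  have hRt : (realBlock (ofReIm X Y))ᵀ ∈ symplecticGroup n ℝ := by
    rw [← realBlock_conjTranspose]
    exact realBlock_mem_symplecticGroup (Unitary.star_mem hU)
  have hM := Submonoid.mul_mem _ h𝒜 hRt
  rw [fromBlocks_mul_realBlock_ofReIm_transpose h₁ h₂] at hM
  obtain ⟨Q, hQ, hfac⟩ := exists_shear_of_lowerTriangular_mem_symplecticGroup hM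
  refine ⟨Q, L, ofReIm X Y, hQ, hL, hU, ?_⟩
  rw [← hfac, ← fromBlocks_mul_realBlock_ofReIm_transpose h₁ h₂, Matrix.mul_assoc,
    mul_eq_one_comm.mp (mem_unitaryGroup_iff_realBlock_mul_transpose.mp hU), Matrix.mul_one]

lemma shear_mul_fromBlocks_mul_realBlock (Q L K : Matrix n n ℝ) (U : Matrix n n ℂ) :
    fromBlocks 1 0 Q 1 * fromBlocks L 0 0 K * realBlock U =
      fromBlocks (L * U.map Complex.re) (L * U.map Complex.im)
        (Q * L * U.map Complex.re - K * U.map Complex.im)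
        (Q * L * U.map Complex.im + K * U.map Complex.re) := by
  simp [realBlock, fromBlocks_multiply, sub_eq_add_neg]

open scoped MatrixOrder in
lemma preIwasawa_injective {Q Q' L L' : Matrix n n ℝ} {U U' : Matrix n n ℂ}
    (hL : L.PosDef) (hL' : L'.PosDef) (hU : U ∈ unitaryGroup n ℂ) (hU' : U' ∈ unitaryGroup n ℂ)
    (h : fromBlocks 1 0 Q 1 * fromBlocks L 0 0 L⁻¹ᵀ * realBlock U =
      fromBlocks 1 0 Q' 1 * fromBlocks L' 0 0 L'⁻¹ᵀ * realBlock U') :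
    Q = Q' ∧ L = L' ∧ U = U' := by
  have sq_eq {L : Matrix n n ℝ} {U : Matrix n n ℂ} (hL : L.PosDef) (hU : U ∈ unitaryGroup n ℂ) :
      L * L = L * U.map Complex.re * (L * U.map Complex.re)ᵀ +
        L * U.map Complex.im * (L * U.map Complex.im)ᵀ := by
    have hLt : Lᵀ = L := by rw [← conjTranspose_eq_transpose_of_trivial, hL.isHermitian.eq]
    calc L * L = L * (U.map Complex.re * (U.map Complex.re)ᵀ +
          U.map Complex.im * (U.map Complex.im)ᵀ) * L := by
          rw [map_re_mul_transpose_add_map_im_mul_transpose hU, Matrix.mul_one]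
      _ = _ := by rw [transpose_mul, transpose_mul, hLt]; noncomm_ring
  have hblocks := h
  rw [shear_mul_fromBlocks_mul_realBlock, shear_mul_fromBlocks_mul_realBlock] at hblocks
  obtain ⟨hre, him, -, -⟩ := fromBlocks_inj.mp hblocks
  obtain rfl : L = L' := (CFC.mul_self_eq_mul_self_iff L L' hL.posSemidef.nonneg
    hL'.posSemidef.nonneg).mp (by rw [sq_eq hL hU, sq_eq hL' hU', hre, him])
  obtain rfl : U = U' := by
    ext i j
    exact Complex.ext (congrFun₂ (hL.isUnit.mul_left_cancel hre) i j)
      (congrFun₂ (hL.isUnit.mul_left_cancel him) i j)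
  have hR : IsUnit (realBlock U) :=
    IsUnit.of_mul_eq_one _ (mem_unitaryGroup_iff_realBlock_mul_transpose.mp hU)
  have hVD := hR.mul_right_cancel h
  simp only [fromBlocks_multiply, Matrix.mul_zero, Matrix.zero_mul, add_zero, zero_add,
    Matrix.one_mul, fromBlocks_inj] at hVD
  exact ⟨hL.isUnit.mul_right_cancel hVD.2.2.1, rfl, rfl⟩

end Matrix

theorem pre_iwasawa_decomposition_general (d : ℕ)
    (𝒜 : Matrix (Fin d ⊕ Fin d) (Fin d ⊕ Fin d) ℝ)
    (hSp : 𝒜ᵀ * fromBlocks 0 1 (-1) 0 * 𝒜 = fromBlocks 0 1 (-1) 0) :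
    (∃ (Q L : Matrix (Fin d) (Fin d) ℝ) (U : Matrix (Fin d) (Fin d) ℂ),
      Qᵀ = Q ∧ IsUnit L.det ∧ U ∈ Matrix.unitaryGroup (Fin d) ℂ ∧
      𝒜 = fromBlocks 1 0 Q 1 * fromBlocks L 0 0 ((L⁻¹)ᵀ) *
        fromBlocks (U.map Complex.re) (U.map Complex.im)
          (-(U.map Complex.im)) (U.map Complex.re)) ∧
    (∃! QLU : Matrix (Fin d) (Fin d) ℝ × Matrix (Fin d) (Fin d) ℝ × Matrix (Fin d) (Fin d) ℂ,
      (QLU.1)ᵀ = QLU.1 ∧ QLU.2.1.PosDef ∧ QLU.2.2 ∈ Matrix.unitaryGroup (Fin d) ℂ ∧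
      𝒜 = fromBlocks 1 0 QLU.1 1 * fromBlocks QLU.2.1 0 0 (((QLU.2.1)⁻¹)ᵀ) *
        fromBlocks ((QLU.2.2).map Complex.re) ((QLU.2.2).map Complex.im)
          (-((QLU.2.2).map Complex.im)) ((QLU.2.2).map Complex.re)) := by
  have h𝒜 : 𝒜 ∈ symplecticGroup (Fin d) ℝ := by
    -- Mathlib's `J` is `[[0, -1], [1, 0]]`, the negative of the paper's.
    have hJ : fromBlocks 0 1 (-1) 0 = -J (Fin d) ℝ := by simp [J, fromBlocks_neg]
    rw [hJ, Matrix.mul_neg, Matrix.neg_mul, neg_inj] at hSp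
    exact SymplecticGroup.mem_iff'.mpr hSp
  obtain ⟨Q, L, U, hQ, hL, hU, rfl⟩ := exists_preIwasawa_of_mem_symplecticGroup h𝒜
  refine ⟨⟨Q, L, U, hQ, (isUnit_iff_isUnit_det L).mp hL.isUnit, hU, rfl⟩,
    ⟨(Q, L, U), ⟨hQ, hL, hU, rfl⟩, ?_⟩⟩
  rintro ⟨Q', L', U'⟩ ⟨-, hL', hU', h⟩
  obtain ⟨rfl, rfl, rfl⟩ := preIwasawa_injective hL' hL hU' hU h.symm
  rfl

/-- **pre-Iwasawa decomposition.** Every `𝒜 ∈ Sp(2d,ℝ)` factors as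
`𝒜 = V_Q · D_L · R_U` with `Q` symmetric, `L` invertible and `U` unitary; the factorization is
unique if moreover `L` is required to be symmetric positive definite. -/
theorem pre_iwasawa_decomposition (d : ℕ) (hd : 1 ≤ d)
    (𝒜 : Matrix (Fin d ⊕ Fin d) (Fin d ⊕ Fin d) ℝ)
    (hSp : 𝒜ᵀ * fromBlocks 0 1 (-1) 0 * 𝒜 = fromBlocks 0 1 (-1) 0) :
    (∃ (Q L : Matrix (Fin d) (Fin d) ℝ) (U : Matrix (Fin d) (Fin d) ℂ),
      Qᵀ = Q ∧ IsUnit L.det ∧ U ∈ Matrix.unitaryGroup (Fin d) ℂ ∧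
      𝒜 = fromBlocks 1 0 Q 1 * fromBlocks L 0 0 ((L⁻¹)ᵀ) *
        fromBlocks (U.map Complex.re) (U.map Complex.im)
          (-(U.map Complex.im)) (U.map Complex.re)) ∧
    (∃! QLU : Matrix (Fin d) (Fin d) ℝ × Matrix (Fin d) (Fin d) ℝ × Matrix (Fin d) (Fin d) ℂ,
      (QLU.1)ᵀ = QLU.1 ∧ QLU.2.1.PosDef ∧ QLU.2.2 ∈ Matrix.unitaryGroup (Fin d) ℂ ∧
      𝒜 = fromBlocks 1 0 QLU.1 1 * fromBlocks QLU.2.1 0 0 (((QLU.2.1)⁻¹)ᵀ) *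
        fromBlocks ((QLU.2.2).map Complex.re) ((QLU.2.2).map Complex.im)
          (-((QLU.2.2).map Complex.im)) ((QLU.2.2).map Complex.re)) :=
  pre_iwasawa_decomposition_general d 𝒜 hSp
end

section
/- For every unitary matrix U = A + iB ∈ U(d,ℂ) (A = Re U, B = Im U real d×d matrices) there exist real orthogonal matrices W, V ∈ O(d,ℝ) and a diagonal unitary matrix Σ = Σ_r + iΣ_i ∈ U(d,ℂ) such that U = W · Σ · Vᵀ; equivalently, A = W Σ_r Vᵀ and B = W Σ_i Vᵀ. -/
/-! `Z = U Uᵀ` is symmetric and unitary, so its real and imaginary parts are commuting real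
symmetric matrices. Diagonalizing them simultaneously gives `Z = W D Wᵀ` with `W` real orthogonal
and `D` diagonal unitary. With `σ² = D`, the unitary matrix `Y = σ⁻¹ Wᵀ U` satisfies `Y Yᵀ = 1`,
so `Yᵀ = Y⁻¹ = Yᴴ`: `Y` is real, and `U = W σ Y`. -/

open Matrix Module.End

namespace LinearMap.IsSymmetric

variable {𝕜 E : Type*} [RCLike 𝕜] [NormedAddCommGroup E] [InnerProductSpace 𝕜 E]
  [FiniteDimensional 𝕜 E] {A B : E →ₗ[𝕜] E}

theorem exists_orthonormalBasis_eigenvectors_of_commute (hA : A.IsSymmetric) (hB : B.IsSymmetric)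
    (hAB : Commute A B) {ι : Type*} [Fintype ι] (hι : Module.finrank 𝕜 E = Fintype.card ι) :
    ∃ (b : OrthonormalBasis ι 𝕜 E) (p q : ι → 𝕜),
      ∀ i, A (b i) = p i • b i ∧ B (b i) = q i • b i := by
  let V (μ : 𝕜 × 𝕜) := eigenspace A μ.2 ⊓ eigenspace B μ.1
  have hV : DirectSum.IsInternal V := directSum_isInternal_of_commute hA hB hAB
  -- `subordinateOrthonormalBasis` needs a finite index type: keep the nonzero joint eigenspaces.
  let _ : Fintype {μ // V μ ≠ ⊥} := hV.submodule_iSupIndep.fintypeNeBotOfFiniteDimensional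
  have hV' := DirectSum.isInternal_ne_bot_iff.2 hV
  have horth := (orthogonalFamily_eigenspace_inf_eigenspace hA hB).comp
    (Subtype.val_injective (p := fun μ => V μ ≠ ⊥))
  let e := Fintype.equivFin ι
  let μ i := (hV'.subordinateOrthonormalBasisIndex hι (e i) horth).1
  refine ⟨(hV'.subordinateOrthonormalBasis hι horth).reindex e.symm, fun i => (μ i).2,
    fun i => (μ i).1, fun i => ?_⟩
  obtain ⟨hiA, hiB⟩ := hV'.subordinateOrthonormalBasis_subordinate hι (e i) horth
  rw [OrthonormalBasis.reindex_apply, Equiv.symm_symm]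
  exact ⟨mem_eigenspace_iff.1 hiA, mem_eigenspace_iff.1 hiB⟩

end LinearMap.IsSymmetric

namespace Matrix

theorem eq_mul_diagonal_mul_star_of_mulVec_transpose_eq_smul {n α : Type*} [Fintype n]
    [DecidableEq n] [CommRing α] [StarRing α] {W M : Matrix n n α} (hW : W ∈ unitaryGroup n α)
    {r : n → α} (hM : ∀ j, M *ᵥ Wᵀ j = r j • Wᵀ j) : M = W * diagonal r * star W := by
  have hMW : M * W = W * diagonal r := by
    ext i j
    rw [mul_diagonal]
    exact (congrFun (hM j) i).trans (mul_comm _ _)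
  rw [← hMW, Matrix.mul_assoc, mem_unitaryGroup_iff.1 hW, Matrix.mul_one]

theorem IsHermitian.exists_unitary_diagonalize_of_commute {𝕜 n : Type*} [RCLike 𝕜] [Fintype n]
    [DecidableEq n] {P Q : Matrix n n 𝕜} (hP : P.IsHermitian) (hQ : Q.IsHermitian)
    (hPQ : Commute P Q) :
    ∃ W ∈ unitaryGroup n 𝕜, ∃ p q : n → 𝕜,
      P = W * diagonal p * star W ∧ Q = W * diagonal q * star W := by
  obtain ⟨b, p, q, hb⟩ := LinearMap.IsSymmetric.exists_orthonormalBasis_eigenvectors_of_commute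
    (isSymmetric_toEuclideanLin_iff.2 hP) (isSymmetric_toEuclideanLin_iff.2 hQ)
    (hPQ.map (toLpLinAlgEquiv (R := 𝕜) (n := n) 2)) finrank_euclideanSpace
  have hW := (EuclideanSpace.basisFun n 𝕜).toMatrix_orthonormalBasis_mem_unitary b
  exact ⟨_, hW, p, q,
    eq_mul_diagonal_mul_star_of_mulVec_transpose_eq_smul hW fun j => congrArg WithLp.ofLp (hb j).1,
    eq_mul_diagonal_mul_star_of_mulVec_transpose_eq_smul hW fun j => congrArg WithLp.ofLp (hb j).2⟩

theorem diagonal_mem_unitaryGroup_iff {𝕜 n : Type*} [RCLike 𝕜] [Fintype n] [DecidableEq n]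
    {δ : n → 𝕜} : diagonal δ ∈ unitaryGroup n 𝕜 ↔ ∀ j, ‖δ j‖ = 1 := by
  rw [mem_unitaryGroup_iff, star_eq_conjTranspose, diagonal_conjTranspose, diagonal_mul_diagonal,
    ← diagonal_one, diagonal_injective.eq_iff, funext_iff]
  refine forall_congr' fun j => ?_
  rw [Pi.star_apply, RCLike.star_def, RCLike.mul_conj, ← RCLike.ofReal_pow,
    ← RCLike.ofReal_one, RCLike.ofReal_inj, pow_eq_one_iff_of_nonneg (norm_nonneg _) two_ne_zero]

section Complex

theorem map_ofReal_mul {n : Type*} [Fintype n] (A B : Matrix n n ℝ) :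
    (A * B).map ((↑) : ℝ → ℂ) = A.map (↑) * B.map (↑) :=
  Matrix.map_mul (f := Complex.ofRealHom)

theorem map_ofReal_one {n : Type*} [DecidableEq n] :
    (1 : Matrix n n ℝ).map ((↑) : ℝ → ℂ) = 1 :=
  Matrix.map_one _ Complex.ofReal_zero Complex.ofReal_one

theorem star_map_ofReal {n : Type*} (A : Matrix n n ℝ) :
    star (A.map ((↑) : ℝ → ℂ)) = Aᵀ.map (↑) := by
  ext i j
  simp

theorem map_ofReal_mem_unitaryGroup {n : Type*} [Fintype n] [DecidableEq n]
    {A : Matrix n n ℝ} (hA : A ∈ orthogonalGroup n ℝ) :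
    A.map ((↑) : ℝ → ℂ) ∈ unitaryGroup n ℂ := by
  rw [mem_unitaryGroup_iff, star_map_ofReal, ← map_ofReal_mul, (mem_orthogonalGroup_iff n ℝ).1 hA,
    map_ofReal_one]

theorem map_re_add_I_smul_map_im {m n : Type*} (M : Matrix m n ℂ) :
    (M.map Complex.re).map (↑) + Complex.I • (M.map Complex.im).map (↑) = M := by
  ext i j
  simpa [mul_comm] using Complex.re_add_im (M i j)

theorem map_im_mul_s2 {l m n : Type*} [Fintype m] (M : Matrix l m ℂ) (N : Matrix m n ℂ) :
    (M * N).map Complex.im =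
      M.map Complex.re * N.map Complex.im + M.map Complex.im * N.map Complex.re := by
  ext i j
  simp [mul_apply, Complex.im_sum, Finset.sum_add_distrib]

theorem map_ofReal_mul_mul_map_ofReal {l m n p : Type*} [Fintype m] [Fintype n]
    (f : ℂ →ₗ[ℝ] ℝ) (A : Matrix l m ℝ) (M : Matrix m n ℂ) (B : Matrix n p ℝ) :
    (A.map ((↑) : ℝ → ℂ) * M * B.map ((↑) : ℝ → ℂ)).map f = A * M.map f * B := by
  ext i j
  simp only [map_apply, mul_apply, map_sum, Finset.sum_mul]
  refine Finset.sum_congr rfl fun b _ => Finset.sum_congr rfl fun a _ => ?_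
  rw [mul_comm, ← mul_assoc, ← Complex.ofReal_mul, ← Complex.real_smul, map_smul, smul_eq_mul]
  ring

theorem commute_map_re_map_im {n : Type*} [Fintype n] {M : Matrix n n ℂ} (hM : IsStarNormal M)
    (hMt : Mᵀ = M) : Commute (M.map Complex.re) (M.map Complex.im) := by
  have hstar : star M = M.map star := by
    rw [star_eq_conjTranspose, conjTranspose, hMt]
  have hre : M.map (Complex.re ∘ star) = M.map Complex.re := by ext; simp
  have him : M.map (Complex.im ∘ star) = -M.map Complex.im := by ext; simp
  -- comparing imaginary parts of `Mᴴ M = M Mᴴ` gives `PQ - QP = QP - PQ` for `P = Re M`, `Q = Im M`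
  have h := congrArg (Matrix.map · Complex.im) hM.star_comm_self.eq
  simp only [hstar, map_im_mul_s2, Matrix.map_map, hre, him, neg_mul, mul_neg] at h
  ext i j
  have hij := congrFun₂ h i j
  simp only [add_apply, neg_apply] at hij
  linarith

variable {n : Type*} [Fintype n] [DecidableEq n]

theorem exists_orthogonal_diagonalize_of_isStarNormal_of_transpose_eq {M : Matrix n n ℂ}
    (hM : IsStarNormal M) (hMt : Mᵀ = M) :
    ∃ W ∈ orthogonalGroup n ℝ, ∃ δ : n → ℂ, M = W.map (↑) * diagonal δ * Wᵀ.map (↑) := by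
  have hHerm (f : ℂ → ℝ) : (M.map f).IsHermitian := by
    rw [IsHermitian, conjTranspose_eq_transpose_of_trivial, ← transpose_map, hMt]
  obtain ⟨W, hW, p, q, hP, hQ⟩ := IsHermitian.exists_unitary_diagonalize_of_commute
    (hHerm Complex.re) (hHerm Complex.im) (commute_map_re_map_im hM hMt)
  rw [star_eq_conjTranspose, conjTranspose_eq_transpose_of_trivial] at hP hQ
  refine ⟨W, hW, fun j => p j + Complex.I * q j, ?_⟩
  have hδ : diagonal (fun j => (p j : ℂ) + Complex.I * q j) =
      (diagonal p).map (↑) + Complex.I • (diagonal q).map (↑) := by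
    rw [diagonal_map Complex.ofReal_zero, diagonal_map Complex.ofReal_zero, ← diagonal_smul,
      diagonal_add]
    rfl
  conv_lhs => rw [← map_re_add_I_smul_map_im M, hP, hQ]
  rw [hδ]
  simp only [map_ofReal_mul, Matrix.mul_add, Matrix.add_mul, Matrix.mul_smul, Matrix.smul_mul]

theorem exists_mem_orthogonalGroup_map_ofReal_eq {Y : Matrix n n ℂ} (hY : Y ∈ unitaryGroup n ℂ)
    (hYt : Y * Yᵀ = 1) : ∃ V ∈ orthogonalGroup n ℝ, V.map (↑) = Y := by
  have hstar : star Y = Yᵀ := left_inv_eq_right_inv (mem_unitaryGroup_iff'.1 hY) hYt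
  have hreal : (Y.map Complex.re).map (↑) = Y := by
    ext i j
    exact Complex.conj_eq_iff_re.1 (congrFun₂ hstar j i)
  refine ⟨Y.map Complex.re, ?_, hreal⟩
  rw [mem_orthogonalGroup_iff]
  apply map_injective Complex.ofReal_injective
  simp only [map_ofReal_mul, transpose_map, hreal, hYt, map_ofReal_one]

theorem exists_eq_diagonal_mul_map_ofReal {X : Matrix n n ℂ} (hX : X ∈ unitaryGroup n ℂ)
    {δ : n → ℂ} (hXt : X * Xᵀ = diagonal δ) :
    ∃ σ : n → ℂ, (∀ j, ‖σ j‖ = 1) ∧ ∃ V ∈ orthogonalGroup n ℝ, X = diagonal σ * V.map (↑) := by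
  have hδ : ∀ j, ‖δ j‖ = 1 := diagonal_mem_unitaryGroup_iff.1
    (hXt ▸ mul_mem hX (transpose_mem_unitaryGroup_iff.2 hX))
  choose σ hσ using fun j => IsAlgClosed.exists_pow_nat_eq (δ j) two_pos
  have hσ1 (j : n) : ‖σ j‖ = 1 := by
    rw [← pow_eq_one_iff_of_nonneg (norm_nonneg _) two_ne_zero, ← norm_pow, hσ, hδ]
  have hS : diagonal σ ∈ unitaryGroup n ℂ := diagonal_mem_unitaryGroup_iff.2 hσ1
  have hYt : (star (diagonal σ) * X) * (star (diagonal σ) * X)ᵀ = 1 := by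
    rw [transpose_mul, Matrix.mul_assoc, ← Matrix.mul_assoc X, hXt, star_eq_conjTranspose,
      diagonal_conjTranspose, diagonal_transpose, diagonal_mul_diagonal, diagonal_mul_diagonal,
      ← diagonal_one]
    congr 1
    funext j
    have hσσ : star (σ j) * σ j = 1 := by
      rw [Complex.star_def, Complex.conj_mul', hσ1, Complex.ofReal_one, one_pow]
    simp only [Pi.star_apply, ← hσ]
    linear_combination (star (σ j) * σ j + 1) * hσσ
  obtain ⟨V, hV, hVY⟩ := exists_mem_orthogonalGroup_map_ofReal_eq
    (mul_mem (Unitary.star_mem hS) hX) hYt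
  refine ⟨σ, hσ1, V, hV, ?_⟩
  rw [hVY, ← Matrix.mul_assoc, mem_unitaryGroup_iff.1 hS, Matrix.one_mul]

end Complex

end Matrix

/-- Joint real singular value decomposition of a unitary matrix:
`U = W Σ Vᵀ` with `W, V` real orthogonal and `Σ` diagonal unitary; equivalently
`Re U = W Σ_r Vᵀ` and `Im U = W Σ_i Vᵀ`. -/
theorem unitary_real_svd (d : ℕ) (U : Matrix (Fin d) (Fin d) ℂ)
    (hU : U ∈ Matrix.unitaryGroup (Fin d) ℂ) :
    ∃ (W V : Matrix (Fin d) (Fin d) ℝ) (σ : Fin d → ℂ),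
      W ∈ Matrix.orthogonalGroup (Fin d) ℝ ∧ V ∈ Matrix.orthogonalGroup (Fin d) ℝ ∧
      (∀ j, ‖σ j‖ = 1) ∧
      U = W.map (fun x : ℝ => (x : ℂ)) * diagonal σ * (Vᵀ).map (fun x : ℝ => (x : ℂ)) ∧
      U.map Complex.re = W * diagonal (fun j => (σ j).re) * Vᵀ ∧
      U.map Complex.im = W * diagonal (fun j => (σ j).im) * Vᵀ := by
  obtain ⟨W, hW, δ, hUU⟩ := exists_orthogonal_diagonalize_of_isStarNormal_of_transpose_eq
    (isStarNormal_of_mem_unitary (mul_mem hU (transpose_mem_unitaryGroup_iff.2 hU)))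
    (by rw [transpose_mul, transpose_transpose])
  have hWW : Wᵀ.map (↑) * W.map (↑) = (1 : Matrix (Fin d) (Fin d) ℂ) := by
    rw [← map_ofReal_mul, (mem_orthogonalGroup_iff' _ ℝ).1 hW, map_ofReal_one]
  have hX : Wᵀ.map (↑) * U ∈ unitaryGroup (Fin d) ℂ :=
    mul_mem (map_ofReal_mem_unitaryGroup (transpose_mem_unitaryGroup_iff.2 hW)) hU
  have hXX : (Wᵀ.map (↑) * U) * (Wᵀ.map (↑) * U)ᵀ = diagonal δ :=
    calc (Wᵀ.map (↑) * U) * (Wᵀ.map (↑) * U)ᵀ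
        = Wᵀ.map (↑) * (U * Uᵀ) * W.map ((↑) : ℝ → ℂ) := by
          rw [transpose_mul, ← transpose_map, transpose_transpose]
          simp only [Matrix.mul_assoc]
      _ = (Wᵀ.map (↑) * W.map (↑)) * diagonal δ * (Wᵀ.map (↑) * W.map ((↑) : ℝ → ℂ)) := by
          rw [hUU]
          simp only [Matrix.mul_assoc]
      _ = diagonal δ := by rw [hWW, Matrix.one_mul, Matrix.mul_one]
  obtain ⟨σ, hσ, V, hV, hσV⟩ := exists_eq_diagonal_mul_map_ofReal hX hXX
  have hUσV : U = W.map (↑) * diagonal σ * V.map (↑) := by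
    rw [Matrix.mul_assoc, ← hσV, ← Matrix.mul_assoc, ← map_ofReal_mul,
      (mem_orthogonalGroup_iff _ ℝ).1 hW, map_ofReal_one, Matrix.one_mul]
  refine ⟨W, Vᵀ, σ, hW, transpose_mem_unitaryGroup_iff.2 hV, hσ, ?_, ?_, ?_⟩
  · rwa [transpose_transpose]
  · rw [transpose_transpose, hUσV, ← Complex.reLm_coe, map_ofReal_mul_mul_map_ofReal,
      diagonal_map (map_zero _)]
  · rw [transpose_transpose, hUσV, ← Complex.imLm_coe, map_ofReal_mul_mul_map_ofReal,
      diagonal_map (map_zero _)]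
end

section
/- Let U ∈ U(d,ℂ) be a unitary matrix. Then the set { τ ∈ ℂ : |τ| = 1 and Im(τU) is not invertible } contains at most 2d elements. In particular, there exists τ ∈ ℂ with |τ| = 1 such that Im(τU) is an invertible real d×d matrix. -/
/-!
For `|τ| = 1` we have `2i · Im(τU) = τU - τ̄Ū`, and multiplying by `τ` gives `τ²U - Ū = U(τ² - UᴴŪ)`
because `UUᴴ = 1`. So `Im(τU)` is singular only if `τ²` is an eigenvalue of `UᴴŪ`, i.e. `τ` is a
root of the degree-`2d` polynomial `χ_{UᴴŪ}(X²)`. The unit circle being infinite, some `τ` on it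
avoids these at most `2d` roots.
-/

open Matrix Polynomial Complex

theorem Polynomial.encard_setOf_isRoot_le {R : Type*} [CommRing R] [IsDomain R] {p : R[X]}
    (hp : p ≠ 0) : {x | p.IsRoot x}.encard ≤ p.natDegree := by
  classical
  have hroots : {x | p.IsRoot x} = (p.roots.toFinset : Set R) := by
    ext x
    simp [mem_roots hp]
  rw [hroots, Set.encard_coe_eq_coe_finsetCard]
  exact_mod_cast (Multiset.toFinset_card_le _).trans (card_roots' p)

theorem Complex.infinite_setOf_norm_eq_one : {τ : ℂ | ‖τ‖ = 1}.Infinite := by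
  have : Infinite Circle :=
    Circle.argEquiv.infinite_iff.2 (Set.Ioc_infinite (by linarith [Real.pi_pos])).to_subtype
  have h : (Metric.sphere (0 : ℂ) 1).Infinite := Set.infinite_coe_iff.1 this
  simpa [Metric.sphere] using h

namespace Matrix

section CharpolyCompXPow

variable {R n : Type*} [CommRing R] [Nontrivial R] [Fintype n] [DecidableEq n]

theorem natDegree_charpoly_comp_X_pow (M : Matrix n n R) (k : ℕ) :
    (M.charpoly.comp (X ^ k)).natDegree = Fintype.card n * k := by
  rw [natDegree_comp_eq_of_mul_ne_zero (by simp [M.charpoly_monic.leadingCoeff]),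
    charpoly_natDegree_eq_dim, natDegree_X_pow]

theorem charpoly_comp_X_pow_monic (M : Matrix n n R) {k : ℕ} (hk : k ≠ 0) :
    (M.charpoly.comp (X ^ k)).Monic :=
  M.charpoly_monic.comp (monic_X_pow k) (by rwa [natDegree_X_pow])

end CharpolyCompXPow

theorem map_im_map_ofReal {m n : Type*} (A : Matrix m n ℂ) :
    (A.map im).map ((↑) : ℝ → ℂ) = (2 * I)⁻¹ • (A - A.map (starRingEnd ℂ)) := by
  ext i j
  simp [Complex.im_eq_sub_conj, div_eq_inv_mul]

variable {n : Type*} [Fintype n] [DecidableEq n]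

theorem det_map_im_eq_zero_iff (A : Matrix n n ℂ) :
    (A.map im).det = 0 ↔ (A - A.map (starRingEnd ℂ)).det = 0 :=
  calc (A.map im).det = 0 ↔ ((A.map im).det : ℂ) = 0 := ofReal_eq_zero.symm
    _ ↔ ((A.map im).map ((↑) : ℝ → ℂ)).det = 0 := by
      rw [← ofRealHom_eq_coe, RingHom.map_det]
      rfl
    _ ↔ (A - A.map (starRingEnd ℂ)).det = 0 := by rw [map_im_map_ofReal, det_smul]; simp

theorem smul_sub_map_conj_eq_mul_scalar_sub {U : Matrix n n ℂ} (hU : U ∈ unitaryGroup n ℂ)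
    {τ : ℂ} (hτ : τ * starRingEnd ℂ τ = 1) :
    τ • (τ • U - (τ • U).map (starRingEnd ℂ)) =
      U * (scalar n (τ ^ 2) - star U * U.map (starRingEnd ℂ)) := by
  rw [mul_sub, ← mul_assoc, mem_unitaryGroup_iff.mp hU, one_mul, scalar_apply]
  ext i j
  simp only [Matrix.smul_apply, Matrix.sub_apply, map_apply, mul_diagonal, smul_eq_mul,
    map_mul]
  linear_combination (-starRingEnd ℂ (U i j)) * hτ

theorem isRoot_charpoly_comp_X_sq_of_det_map_im_eq_zero {U : Matrix n n ℂ}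
    (hU : U ∈ unitaryGroup n ℂ) {τ : ℂ} (hτ : ‖τ‖ = 1) (h : ((τ • U).map im).det = 0) :
    ((star U * U.map (starRingEnd ℂ)).charpoly.comp (X ^ 2)).IsRoot τ := by
  have hτ_conj : τ * starRingEnd ℂ τ = 1 := by
    rw [mul_conj, normSq_eq_norm_sq, hτ]
    simp
  have hU_det : IsUnit U.det := isUnit_det_of_right_inverse (mem_unitaryGroup_iff.mp hU)
  have hdet := congrArg det (smul_sub_map_conj_eq_mul_scalar_sub hU hτ_conj)
  rw [det_smul, (det_map_im_eq_zero_iff _).1 h, mul_zero, det_mul, eq_comm,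
    hU_det.mul_right_eq_zero] at hdet
  rw [IsRoot, eval_comp, eval_pow, eval_X, eval_charpoly, hdet]

end Matrix

theorem im_tau_smul_invertible_general (d : ℕ) (U : Matrix (Fin d) (Fin d) ℂ)
    (hU : U ∈ Matrix.unitaryGroup (Fin d) ℂ) :
    {τ : ℂ | ‖τ‖ = 1 ∧ ¬ IsUnit ((τ • U).map Complex.im).det}.encard ≤ (2 * d : ℕ) ∧
    ∃ τ : ℂ, ‖τ‖ = 1 ∧ IsUnit ((τ • U).map Complex.im).det := by
  set p := (star U * U.map (starRingEnd ℂ)).charpoly.comp (X ^ 2)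
  have hbad :
      {τ : ℂ | ‖τ‖ = 1 ∧ ¬ IsUnit ((τ • U).map Complex.im).det} ⊆ {τ | p.IsRoot τ} :=
    fun τ ⟨hτ, hsing⟩ => isRoot_charpoly_comp_X_sq_of_det_map_im_eq_zero hU hτ
      (by simpa [isUnit_iff_ne_zero] using hsing)
  have hcard := (Set.encard_le_encard hbad).trans
    (Polynomial.encard_setOf_isRoot_le (charpoly_comp_X_pow_monic _ two_ne_zero).ne_zero)
  rw [natDegree_charpoly_comp_X_pow, Fintype.card_fin, mul_comm] at hcard
  refine ⟨hcard, ?_⟩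
  obtain ⟨τ, hτ, hgood⟩ :=
    (Complex.infinite_setOf_norm_eq_one.sdiff (Set.finite_of_encard_le_coe hcard)).nonempty
  exact ⟨τ, hτ, not_not.1 fun hsing => hgood ⟨hτ, hsing⟩⟩

/-- For a unitary `U ∈ U(d,ℂ)`, the set of `τ` on the unit circle for which
`Im(τU)` fails to be invertible has at most `2d` elements; in particular some `τ` with `|τ| = 1`
makes `Im(τU)` invertible. -/
theorem im_tau_smul_invertible (d : ℕ) (hd : 1 ≤ d) (U : Matrix (Fin d) (Fin d) ℂ)
    (hU : U ∈ Matrix.unitaryGroup (Fin d) ℂ) :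
    {τ : ℂ | ‖τ‖ = 1 ∧ ¬ IsUnit ((τ • U).map Complex.im).det}.encard ≤ (2 * d : ℕ) ∧
    ∃ τ : ℂ, ‖τ‖ = 1 ∧ IsUnit ((τ • U).map Complex.im).det :=
  im_tau_smul_invertible_general d U hU
end

section
/- Let P ∈ ℝ^{d×d} be symmetric and set U' = (I + P²)^{−1/2}(P + iI), where (I + P²)^{−1/2} is the inverse of the positive definite square root of I + P². Then U' is unitary, its imaginary part Im U' = (I + P²)^{−1/2} is invertible, and (Im U')⁻¹ · (Re U') = P. -/
open Matrix

/-- For symmetric `P` and `S` the (unique) symmetric positive definite square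
root of `I + P²`, the matrix `U' = S⁻¹(P + iI)` is unitary, its imaginary part is the invertible
matrix `S⁻¹`, and `(Im U')⁻¹ (Re U') = P`. -/
theorem unitary_from_symmetric (d : ℕ) (P S : Matrix (Fin d) (Fin d) ℝ)
    (hP : Pᵀ = P) (hS : S.PosDef) (hSsq : S * S = 1 + P * P) :
    letI U' : Matrix (Fin d) (Fin d) ℂ :=
      (S⁻¹).map (fun x : ℝ => (x : ℂ)) * (P.map (fun x : ℝ => (x : ℂ)) + Complex.I • 1)
    U' ∈ Matrix.unitaryGroup (Fin d) ℂ ∧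
    U'.map Complex.im = S⁻¹ ∧
    IsUnit (S⁻¹).det ∧
    (U'.map Complex.im)⁻¹ * U'.map Complex.re = P := by
  have hSdet : IsUnit S.det := hS.det_pos.ne'.isUnit
  have hSinv : S⁻¹ * S = 1 := Matrix.nonsing_inv_mul S hSdet
  have hSinv' : S * S⁻¹ = 1 := Matrix.mul_nonsing_inv S hSdet
  have hfc : (fun x : ℝ => (x : ℂ)) = ⇑(Complex.ofRealHom : ℝ →+* ℂ) := rfl
  simp only [hfc]
  set f : ℝ →+* ℂ := Complex.ofRealHom with hf
  set Pc : Matrix (Fin d) (Fin d) ℂ := P.map ⇑f with hPc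
  set Sc : Matrix (Fin d) (Fin d) ℂ := S.map ⇑f with hSc
  set Tc : Matrix (Fin d) (Fin d) ℂ := (S⁻¹).map ⇑f with hTc
  set U' : Matrix (Fin d) (Fin d) ℂ := Tc * (Pc + Complex.I • 1) with hU'
  have hTS : Tc * Sc = 1 := by
    rw [hTc, hSc, ← Matrix.map_mul, hSinv, Matrix.map_one f f.map_zero f.map_one]
  have hST : Sc * Tc = 1 := by
    rw [hTc, hSc, ← Matrix.map_mul, hSinv', Matrix.map_one f f.map_zero f.map_one]
  have hSS : Sc * Sc = (S * S).map ⇑f := by rw [hSc, ← Matrix.map_mul]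
  have hPP : Pc * Pc = (P * P).map ⇑f := by rw [hPc, ← Matrix.map_mul]
  have hSc2 : Sc * Sc = 1 + Pc * Pc := by
    rw [hSS, hPP, hSsq]
    ext i j
    simp [Matrix.map_apply, Matrix.add_apply, Matrix.one_apply, apply_ite f, -Matrix.map_mul]
  -- conj-transposes
  have hmapCT : ∀ A : Matrix (Fin d) (Fin d) ℝ, (A.map ⇑f)ᴴ = Aᵀ.map ⇑f := by
    intro A
    ext i j
    simp [Matrix.conjTranspose_apply, Matrix.map_apply, hf, Complex.conj_ofReal]
  have hSsymm : Sᵀ = S := hS.isHermitian.eq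
  have hSinvsymm : (S⁻¹)ᵀ = S⁻¹ := by rw [Matrix.transpose_nonsing_inv, hSsymm]
  have hPcH : Pcᴴ = Pc := by rw [hPc, hmapCT, hP]
  have hTcH : Tcᴴ = Tc := by rw [hTc, hmapCT, hSinvsymm]
  -- U' = Tc * Pc + I • Tc
  have hU : U' = Tc * Pc + Complex.I • Tc := by
    rw [hU', Matrix.mul_add, Matrix.mul_smul, Matrix.mul_one]
  -- star U'
  have hstar : star U' = Pc * Tc - Complex.I • Tc := by
    show U'ᴴ = _
    rw [hU, Matrix.conjTranspose_add, Matrix.conjTranspose_mul, Matrix.conjTranspose_smul,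
      hPcH, hTcH]
    simp [sub_eq_add_neg, Complex.conj_I]
  -- Tc * Tc is the two-sided inverse of 1 + Pc * Pc
  have hTT1 : Tc * Tc * (1 + Pc * Pc) = 1 := by
    rw [← hSc2, ← mul_assoc, mul_assoc Tc Tc Sc, hTS, mul_one, hTS]
  have hTT2 : (1 + Pc * Pc) * (Tc * Tc) = 1 := by
    rw [← hSc2, ← mul_assoc, mul_assoc Sc Sc Tc, hST, mul_one, hST]
  -- Pc commutes with Tc * Tc
  have h1 : (1 + Pc * Pc) * Pc = Pc * (1 + Pc * Pc) := by noncomm_ring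
  have hcomm : Pc * (Tc * Tc) = (Tc * Tc) * Pc := by
    have h2 : Pc * (Tc * Tc) = Tc * Tc * ((1 + Pc * Pc) * (Pc * (Tc * Tc))) := by
      rw [← mul_assoc (Tc * Tc), hTT1, one_mul]
    rw [h2, ← mul_assoc (1 + Pc * Pc) Pc (Tc * Tc), h1,
      mul_assoc Pc (1 + Pc * Pc) (Tc * Tc), hTT2, mul_one]
  -- unitarity
  have hunit : U' ∈ Matrix.unitaryGroup (Fin d) ℂ := by
    rw [Matrix.mem_unitaryGroup_iff']
    have expand : star U' * U'
        = Pc * (Tc * Tc) * Pc + Complex.I • (Pc * (Tc * Tc)) - Complex.I • ((Tc * Tc) * Pc)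
          - (Complex.I * Complex.I) • (Tc * Tc) := by
      rw [hstar, hU]
      simp only [Matrix.add_mul, Matrix.mul_add, Matrix.sub_mul, Matrix.mul_sub,
        Matrix.smul_mul, Matrix.mul_smul, smul_smul, smul_add, smul_sub, mul_assoc]
      abel
    rw [expand, hcomm, add_sub_cancel_right, Complex.I_mul_I, neg_smul, one_smul,
      sub_neg_eq_add]
    calc (Tc * Tc) * Pc * Pc + Tc * Tc = (Tc * Tc) * (1 + Pc * Pc) := by noncomm_ring
      _ = 1 := hTT1
  -- real and imaginary parts
  have hTP : Tc * Pc = (S⁻¹ * P).map ⇑f := by rw [hTc, hPc, ← Matrix.map_mul]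
  have him : U'.map Complex.im = S⁻¹ := by
    ext i j
    rw [hU, hTP]
    simp [Matrix.map_apply, Matrix.add_apply, Matrix.smul_apply, hTc, hf, -Matrix.map_mul,
      Complex.ofRealHom_eq_coe, smul_eq_mul, Complex.add_im, Complex.mul_im,
      Complex.I_re, Complex.I_im, Complex.ofReal_re, Complex.ofReal_im]
  have hre : U'.map Complex.re = S⁻¹ * P := by
    ext i j
    rw [hU, hTP]
    simp [Matrix.map_apply, Matrix.add_apply, Matrix.smul_apply, hTc, hf, -Matrix.map_mul,
      Complex.ofRealHom_eq_coe, smul_eq_mul, Complex.add_re, Complex.mul_re,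
      Complex.I_re, Complex.I_im, Complex.ofReal_re, Complex.ofReal_im]
  refine ⟨hunit, him, S.isUnit_nonsing_inv_det hSdet, ?_⟩
  rw [hre, him, Matrix.nonsing_inv_nonsing_inv S hSdet, ← mul_assoc, hSinv', one_mul]
end

section
/- Let d ≥ 1 and f ∈ L²(ℝ^d). Define the quadratic Rihaczek distribution R(f,f)(x,ω) = e^{−2πi x·ω} f(x) conj((𝓕f)(ω)) for almost every (x,ω) ∈ ℝ^{2d}, where 𝓕 is the Fourier–Plancherel transform on L²(ℝ^d). If R(f,f) is supported on a set of finite Lebesgue measure in ℝ^{2d}, then f = 0 almost everywhere. -/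
/-!
Let `A` and `B` be measurable essential supports of `f` and `𝓕 f`. The hypothesis on the
Rihaczek distribution forces `|A| |B| ≤ |S| < ∞`, so it suffices to show (Amrein–Berthier,
Benedicks) that no nonzero `g ∈ L²` has `g` supported on `A` and `𝓕 g` on `B` with both of
finite measure.

For `v` supported on `A`, `𝓕 v (ω) = ⟪1_A · conj e_ω, v⟫` with `‖1_A · conj e_ω‖² = |A|`, so by
Bessel's inequality an orthonormal family supported on `A` with Fourier transforms supported on
`B` satisfies `∑ᵢ |𝓕 vᵢ(ω)|² ≤ |A|`; integrating over `B` shows it has at most `|A| |B|` members.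
Now take `N > (|A| + 1) |B|` and a small `a ≠ 0` such that the union `A'` of the translates
`A + j a`, `j < N`, has measure `< |A| + 1`. The functions `g (· - j a)` are supported on `A'`,
their Fourier transforms `e_a ^ j · 𝓕 g` stay supported on `B`, and they are linearly
independent because a nonzero polynomial in `e_a` vanishes only on a countable union of
hyperplanes. Gram–Schmidt turns them into `N` orthonormal functions, contradicting the bound.
-/

open MeasureTheory
open scoped ComplexConjugate

open Complex Filter Set Topology InnerProductSpace
open scoped ENNReal symmDiff Matrix

section Translation

variable {G : Type*} [NormedAddCommGroup G] [MeasurableSpace G] [BorelSpace G]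
  {μ : Measure G} [μ.IsAddRightInvariant] [μ.InnerRegularCompactLTTop] [IsLocallyFiniteMeasure μ]
  {A : Set G}

theorem tendsto_measure_preimage_sub_symmDiff (hA : NullMeasurableSet A μ) (hAfin : μ A ≠ ∞) :
    Tendsto (fun v => μ (((fun x => x - v) ⁻¹' A) ∆ A)) (𝓝 0) (𝓝 0) := by
  let shift : C(G, C(G, G)) := ContinuousMap.curry ⟨fun p : G × G => p.2 - p.1, by fun_prop⟩
  have h0 : shift 0 ⁻¹' A = A := by ext; simp [shift]
  have := tendsto_measure_symmDiff_preimage_nhds_zero (shift.continuous.tendsto 0)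
    (.of_forall fun v => measurePreserving_sub_right μ v) (measurePreserving_sub_right μ 0) hA hAfin
  rwa [h0] at this

theorem exists_ne_zero_measure_biUnion_preimage_nsmul_sub_lt [NormedSpace ℝ G] [Nontrivial G]
    (hA : NullMeasurableSet A μ) (hAfin : μ A ≠ ∞) (N : ℕ) {ε : ℝ≥0∞} (hε : 0 < ε) :
    ∃ a ≠ 0, μ (⋃ j ∈ Finset.range N, (fun x => x - j • a) ⁻¹' A) < μ A + ε := by
  have hsum : Tendsto (fun a : G => ∑ j ∈ Finset.range N, μ (((fun x => x - j • a) ⁻¹' A) ∆ A))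
      (𝓝 0) (𝓝 0) := by
    simpa using tendsto_finsetSum _ fun (j : ℕ) _ =>
      (tendsto_measure_preimage_sub_symmDiff hA hAfin).comp
        ((continuous_const_smul j).tendsto' 0 0 (smul_zero j))
  obtain ⟨a, ha_lt, ha_ne⟩ :=
    ((hsum.eventually (gt_mem_nhds hε)).filter_mono nhdsWithin_le_nhds).and
      (self_mem_nhdsWithin (s := {0}ᶜ)) |>.exists
  refine ⟨a, ha_ne, ?_⟩
  calc μ (⋃ j ∈ Finset.range N, (fun x => x - j • a) ⁻¹' A)
      ≤ μ (A ∪ ⋃ j ∈ Finset.range N, ((fun x => x - j • a) ⁻¹' A) ∆ A) := by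
        refine measure_mono (iUnion₂_subset fun j hj x hx => ?_)
        by_cases hxA : x ∈ A
        · exact .inl hxA
        · exact .inr (mem_biUnion hj (.inl ⟨hx, hxA⟩))
    _ ≤ μ A + ∑ j ∈ Finset.range N, μ (((fun x => x - j • a) ⁻¹' A) ∆ A) :=
        (measure_union_le _ _).trans (add_le_add le_rfl (measure_biUnion_finset_le _ _))
    _ < μ A + ε := ENNReal.add_lt_add_left hAfin ha_lt

end Translation

namespace MeasureTheory.Lp

variable {α : Type*} [MeasurableSpace α]

def supported (𝕜 E : Type*) [NormedField 𝕜] [NormedAddCommGroup E] [NormedSpace 𝕜 E]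
    (p : ℝ≥0∞) (μ : Measure α) (A : Set α) : Submodule 𝕜 (Lp E p μ) where
  carrier := {g | ∀ᵐ x ∂μ, x ∉ A → g x = 0}
  zero_mem' := by filter_upwards [coeFn_zero E p μ] with x hx _ using hx
  add_mem' {f g} hf hg := show ∀ᵐ x ∂μ, _ by
    filter_upwards [coeFn_add f g, hf, hg] with x hx hfx hgx hxA
    rw [hx, Pi.add_apply, hfx hxA, hgx hxA, add_zero]
  smul_mem' c f hf := show ∀ᵐ x ∂μ, _ by
    filter_upwards [coeFn_smul c f, hf] with x hx hfx hxA
    rw [hx, Pi.smul_apply, hfx hxA, smul_zero]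

variable {𝕜 E : Type*} [NormedField 𝕜] [NormedAddCommGroup E] [NormedSpace 𝕜 E]
  {p : ℝ≥0∞} {μ : Measure α}

theorem mem_supported_iff {A : Set α} {g : Lp E p μ} :
    g ∈ supported 𝕜 E p μ A ↔ ∀ᵐ x ∂μ, x ∉ A → g x = 0 := Iff.rfl

theorem supported_mono {A A' : Set α} (h : A ⊆ A') :
    supported 𝕜 E p μ A ≤ supported 𝕜 E p μ A' := fun _ hg => by
  rw [mem_supported_iff]
  filter_upwards [hg] with x hx hxA' using hx fun hxA => hxA' (h hxA)

theorem eq_zero_of_mem_supported {A : Set α} (hA : μ A = 0) {g : Lp E p μ}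
    (hg : g ∈ supported 𝕜 E p μ A) : g = 0 := by
  rw [Lp.eq_zero_iff_ae_eq_zero]
  filter_upwards [hg, measure_eq_zero_iff_ae_notMem.mp hA] with x hx hxA using hx hxA

theorem integrable_of_mem_supported [NormedSpace ℝ E] [Fact (1 ≤ p)] {A : Set α}
    (hAfin : μ A ≠ ∞) {g : Lp E p μ} (hg : g ∈ supported 𝕜 E p μ A) : Integrable g μ := by
  have : IsFiniteMeasure (μ.restrict A) := isFiniteMeasure_restrict.mpr hAfin
  exact IntegrableOn.integrable_of_ae_notMem_eq_zero
    (((Lp.memLp g).restrict A).integrable Fact.out) hg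

end MeasureTheory.Lp

section

variable {α : Type*} [MeasurableSpace α] {μ : Measure α} {p : ℝ≥0∞}

theorem Polynomial.ae_eval_ne_zero {z : α → ℂ} (hz : ∀ c, μ {x | z x = c} = 0)
    {P : Polynomial ℂ} (hP : P ≠ 0) : ∀ᵐ x ∂μ, P.eval (z x) ≠ 0 := by
  have hsub : {x | ¬ P.eval (z x) ≠ 0} ⊆ ⋃ r ∈ P.roots.toFinset, {x | z x = r} := fun x hx =>
    mem_biUnion (by simpa [hP] using hx) rfl
  exact measure_mono_null hsub ((measure_biUnion_null_iff (Finset.countable_toSet _)).mpr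
    fun r _ => hz r)

theorem MeasureTheory.Lp.linearIndependent_of_coeFn_eq_pow_mul {F : ℕ → Lp ℂ p μ} {z h : α → ℂ}
    (hF : ∀ n, F n =ᵐ[μ] fun x => z x ^ n * h x) (hh : ¬ h =ᵐ[μ] 0)
    (hz : ∀ c, μ {x | z x = c} = 0) : LinearIndependent ℂ F := by
  rw [linearIndependent_iff']
  intro s c hsum
  have hmono := (Polynomial.basisMonomials ℂ).linearIndependent
  rw [Polynomial.coe_basisMonomials] at hmono
  refine linearIndependent_iff'.mp hmono s c ?_
  set P : Polynomial ℂ := ∑ i ∈ s, c i • Polynomial.monomial i 1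
  by_contra hP
  apply hh
  have hPh : ∀ᵐ x ∂μ, P.eval (z x) * h x = 0 := by
    filter_upwards [Lp.coeFn_finsetSum s (fun i => c i • F i), ae_all_iff.mpr hF,
      ae_all_iff.mpr fun i => Lp.coeFn_smul (c i) (F i), hsum ▸ Lp.coeFn_zero ℂ p μ]
      with x hsum_x hF_x hsmul_x hzero_x
    calc P.eval (z x) * h x = ∑ i ∈ s, c i * (z x ^ i * h x) := by
          simp [P, Polynomial.eval_finsetSum, Finset.sum_mul, mul_assoc]
      _ = (∑ i ∈ s, c i • F i) x := by
          simp only [hsum_x, Finset.sum_apply, hsmul_x, Pi.smul_apply, hF_x, smul_eq_mul]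
      _ = 0 := hzero_x
  filter_upwards [hPh, Polynomial.ae_eval_ne_zero hz hP] with x hx hPx
  exact (mul_eq_zero.mp hx).resolve_left hPx

end

theorem MeasureTheory.L2.integral_norm_sq_eq_norm_sq {α 𝕜 E : Type*} [MeasurableSpace α]
    {μ : Measure α} [RCLike 𝕜] [NormedAddCommGroup E] [InnerProductSpace 𝕜 E] (f : Lp E 2 μ) :
    ∫ x, ‖f x‖ ^ 2 ∂μ = ‖f‖ ^ 2 := by
  rw [← inner_self_eq_norm_sq (𝕜 := 𝕜), L2.inner_def, ← integral_re (L2.integrable_inner f f)]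
  simp_rw [inner_self_eq_norm_sq]

theorem MeasureTheory.AEStronglyMeasurable.exists_measurableSet_ae_mem_iff_ne_zero
    {α E : Type*} [MeasurableSpace α] {μ : Measure α} [TopologicalSpace E]
    [TopologicalSpace.MetrizableSpace E] [Zero E] {f : α → E} (hf : AEStronglyMeasurable f μ) :
    ∃ A, MeasurableSet A ∧ ∀ᵐ x ∂μ, x ∈ A ↔ f x ≠ 0 := by
  refine ⟨{x | hf.mk f x = 0}ᶜ,
    (hf.stronglyMeasurable_mk.measurableSet_eq_fun stronglyMeasurable_const).compl, ?_⟩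
  filter_upwards [hf.ae_eq_mk] with x hx
  simp [hx]

theorem MeasureTheory.Measure.mul_le_prod_of_ae_mul_eq_zero {α β M : Type*} [MeasurableSpace α]
    [MeasurableSpace β] [MulZeroClass M] [NoZeroDivisors M] {μ : Measure α} {ν : Measure β}
    [SFinite ν] {u : α → M} {w : β → M} {A : Set α} {B : Set β} {S : Set (α × β)}
    (hA : ∀ᵐ x ∂μ, x ∈ A → u x ≠ 0) (hB : ∀ᵐ y ∂ν, y ∈ B → w y ≠ 0)
    (hS : ∀ᵐ p ∂μ.prod ν, p ∉ S → u p.1 * w p.2 = 0) : μ A * ν B ≤ μ.prod ν S := by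
  rw [← Measure.prod_prod]
  refine measure_mono_ae ?_
  filter_upwards [quasiMeasurePreserving_fst.ae hA, quasiMeasurePreserving_snd.ae hB, hS]
    with p hpA hpB hpS hp
  by_contra hpS'
  exact mul_ne_zero (hpA hp.1) (hpB hp.2) (hpS hpS')

namespace Benedicks

variable {ι : Type*} [Fintype ι]

noncomputable def fourierKernel (t ω : ι → ℝ) : ℂ :=
  cexp (-2 * (Real.pi : ℂ) * I * ((t ⬝ᵥ ω : ℝ) : ℂ))

lemma fourierKernel_add_left (s t ω : ι → ℝ) :
    fourierKernel (s + t) ω = fourierKernel s ω * fourierKernel t ω := by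
  simp only [fourierKernel, add_dotProduct, ofReal_add, ← Complex.exp_add]
  ring_nf

lemma fourierKernel_nsmul (n : ℕ) (t ω : ι → ℝ) :
    fourierKernel (n • t) ω = fourierKernel t ω ^ n := by
  rw [fourierKernel, fourierKernel, smul_dotProduct, nsmul_eq_mul, ← Complex.exp_nat_mul]
  push_cast
  ring_nf

lemma norm_fourierKernel (t ω : ι → ℝ) : ‖fourierKernel t ω‖ = 1 := by
  rw [fourierKernel, Complex.norm_exp]
  simp

lemma continuous_fourierKernel_left (ω : ι → ℝ) : Continuous fun t => fourierKernel t ω := by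
  unfold fourierKernel dotProduct
  fun_prop

lemma countable_setOf_cexp_eq (z : ℂ) :
    {s : ℝ | cexp (-2 * (Real.pi : ℂ) * I * s) = z}.Countable := by
  rcases Set.eq_empty_or_nonempty {s : ℝ | cexp (-2 * (Real.pi : ℂ) * I * s) = z}
    with h | ⟨s₀, hs₀⟩
  · exact h ▸ Set.countable_empty
  refine (Set.countable_range fun n : ℤ => s₀ - n).mono fun s hs => ?_
  obtain ⟨n, hn⟩ := Complex.exp_eq_exp_iff_exists_int.mp (hs.trans hs₀.symm)
  refine ⟨n, ?_⟩
  have h2π : 2 * (Real.pi : ℂ) * I ≠ 0 := by simp [Real.pi_ne_zero]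
  have : ((s₀ - n : ℝ) : ℂ) = s := by
    apply mul_left_cancel₀ h2π
    push_cast
    linear_combination hn
  exact_mod_cast this

lemma volume_setOf_fourierKernel_eq {a : ι → ℝ} (ha : a ≠ 0) (z : ℂ) :
    volume {ω : ι → ℝ | fourierKernel a ω = z} = 0 := by
  obtain ⟨i, hi⟩ := Function.ne_iff.mp ha
  classical
  have hsurj : Function.Surjective (dotProductBilin ℝ ℝ a) := fun y =>
    ⟨Pi.single i (y / a i), by simp [dotProduct_single, mul_div_cancel₀ _ hi]⟩
  have hmeas : MeasurableSet {s : ℝ | cexp (-2 * (Real.pi : ℂ) * I * s) = z}ᶜ :=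
    (measurableSet_eq_fun (by fun_prop) measurable_const).compl
  have := (ae_comp_linearMap_mem_iff _ volume volume hsurj hmeas).mpr
    (measure_eq_zero_iff_ae_notMem.mp ((countable_setOf_cexp_eq z).measure_zero volume))
  exact measure_eq_zero_iff_ae_notMem.mpr this

local notation "L²(" X ")" => Lp ℂ 2 (volume : Measure (X → ℝ))

def IsFourierPlancherel (𝓕 : L²(ι) ≃ₗᵢ[ℂ] L²(ι)) : Prop :=
  ∀ φ : (ι → ℝ) → ℂ, Integrable φ → ∀ hφ : MemLp φ 2 volume,
    ⇑(𝓕 (hφ.toLp φ)) =ᵐ[volume] fun ω => ∫ t, φ t * fourierKernel t ω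

noncomputable def translate (b : ι → ℝ) (g : L²(ι)) : L²(ι) :=
  Lp.compMeasurePreserving (· - b) (measurePreserving_sub_right volume b) g

variable {𝓕 : L²(ι) ≃ₗᵢ[ℂ] L²(ι)}

namespace IsFourierPlancherel

lemma coeFn_eq_integral (h𝓕 : IsFourierPlancherel 𝓕) {g : L²(ι)} (hg : Integrable g) :
    𝓕 g =ᵐ[volume] fun ω => ∫ t, g t * fourierKernel t ω := by
  simpa using h𝓕 g hg (Lp.memLp g)

lemma coeFn_translate (h𝓕 : IsFourierPlancherel 𝓕) {g : L²(ι)} (hg : Integrable g) (b : ι → ℝ) :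
    𝓕 (translate b g) =ᵐ[volume] fun ω => fourierKernel b ω * 𝓕 g ω := by
  have hcoe := Lp.coeFn_compMeasurePreserving g (measurePreserving_sub_right volume b)
  have htr : Integrable (translate b g) := ((hg.comp_sub_right b).congr hcoe.symm)
  filter_upwards [h𝓕.coeFn_eq_integral htr, h𝓕.coeFn_eq_integral hg] with ω h1 h2
  rw [h1, h2, ← integral_const_mul]
  calc ∫ t, translate b g t * fourierKernel t ω
      = ∫ t, g (t - b) * fourierKernel (t - b + b) ω :=
        integral_congr_ae (by
          filter_upwards [hcoe] with t ht
          rw [translate, ht, sub_add_cancel, Function.comp_apply])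
    _ = ∫ t, g t * fourierKernel (t + b) ω :=
        integral_sub_right_eq_self (fun t => g t * fourierKernel (t + b) ω) b
    _ = ∫ t, fourierKernel b ω * (g t * fourierKernel t ω) := by
        simp only [fourierKernel_add_left]; congr 1; ext t; ring

end IsFourierPlancherel

variable {A B : Set (ι → ℝ)}

lemma memLp_indicator_conj_fourierKernel (hA : MeasurableSet A) (hAfin : volume A ≠ ∞)
    (ω : ι → ℝ) : MemLp (A.indicator fun t => conj (fourierKernel t ω)) 2 volume := by
  have : IsFiniteMeasure (volume.restrict A) := isFiniteMeasure_restrict.mpr hAfin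
  refine (memLp_indicator_iff_restrict hA).mpr (.of_bound ?_ 1 (.of_forall fun t => ?_))
  · exact (continuous_conj.comp (continuous_fourierKernel_left ω)).aestronglyMeasurable
  · simp [norm_fourierKernel]

noncomputable def conjKernelOn (hA : MeasurableSet A) (hAfin : volume A ≠ ∞) (ω : ι → ℝ) :
    L²(ι) :=
  (memLp_indicator_conj_fourierKernel hA hAfin ω).toLp _

lemma inner_conjKernelOn (hA : MeasurableSet A) (hAfin : volume A ≠ ∞) (ω : ι → ℝ) {v : L²(ι)}
    (hv : v ∈ Lp.supported ℂ ℂ 2 volume A) :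
    inner ℂ (conjKernelOn hA hAfin ω) v = ∫ t, v t * fourierKernel t ω := by
  rw [L2.inner_def]
  refine integral_congr_ae ?_
  filter_upwards [(memLp_indicator_conj_fourierKernel hA hAfin ω).coeFn_toLp, hv]
    with t hu hvt
  rw [conjKernelOn, hu]
  by_cases ht : t ∈ A <;> simp [ht, hvt, mul_comm]

lemma norm_conjKernelOn_sq_le (hA : MeasurableSet A) (hAfin : volume A ≠ ∞) (ω : ι → ℝ) :
    ‖conjKernelOn hA hAfin ω‖ ^ 2 ≤ volume.real A := by
  have hle : ‖conjKernelOn hA hAfin ω‖ ≤ ‖indicatorConstLp 2 hA hAfin (1 : ℂ)‖ := by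
    refine Lp.norm_le_norm_of_ae_le ?_
    filter_upwards [(memLp_indicator_conj_fourierKernel hA hAfin ω).coeFn_toLp,
      indicatorConstLp_coeFn (p := 2) (hs := hA) (hμs := hAfin) (c := (1 : ℂ))] with t hu h1
    rw [conjKernelOn, hu, h1]
    by_cases ht : t ∈ A <;> simp [ht, norm_fourierKernel]
  rw [norm_indicatorConstLp two_ne_zero ENNReal.ofNat_ne_top, norm_one, one_mul] at hle
  calc ‖conjKernelOn hA hAfin ω‖ ^ 2 ≤ (volume.real A ^ (1 / (2 : ℝ≥0∞).toReal)) ^ 2 :=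
        pow_le_pow_left₀ (norm_nonneg _) hle 2
    _ = volume.real A := by
        rw [← Real.rpow_natCast, ← Real.rpow_mul measureReal_nonneg]
        norm_num

lemma translate_mem_supported {g : L²(ι)} (hg : g ∈ Lp.supported ℂ ℂ 2 volume A) (b : ι → ℝ) :
    translate b g ∈ Lp.supported ℂ ℂ 2 volume ((· - b) ⁻¹' A) := by
  filter_upwards [Lp.coeFn_compMeasurePreserving g (measurePreserving_sub_right volume b),
    (measurePreserving_sub_right volume b).quasiMeasurePreserving.ae hg] with x hx hgx hxA
  rw [translate, hx]
  exact hgx hxA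

namespace IsFourierPlancherel

variable {κ : Type*} [Fintype κ] {v : κ → L²(ι)}

lemma ae_sum_norm_sq_le (h𝓕 : IsFourierPlancherel 𝓕) (hA : MeasurableSet A)
    (hAfin : volume A ≠ ∞) (hv : Orthonormal ℂ v) (hvA : ∀ i, v i ∈ Lp.supported ℂ ℂ 2 volume A) :
    ∀ᵐ ω, ∑ i, ‖𝓕 (v i) ω‖ ^ 2 ≤ volume.real A := by
  filter_upwards [ae_all_iff.mpr fun i =>
    h𝓕.coeFn_eq_integral (Lp.integrable_of_mem_supported hAfin (hvA i))] with ω hω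
  calc ∑ i, ‖𝓕 (v i) ω‖ ^ 2 = ∑ i, ‖inner ℂ (v i) (conjKernelOn hA hAfin ω)‖ ^ 2 := by
        simp only [hω, ← inner_conjKernelOn hA hAfin ω (hvA _), norm_inner_symm]
    _ ≤ ‖conjKernelOn hA hAfin ω‖ ^ 2 := hv.sum_inner_products_le _
    _ ≤ volume.real A := norm_conjKernelOn_sq_le hA hAfin ω

lemma card_le_of_orthonormal (h𝓕 : IsFourierPlancherel 𝓕) (hA : MeasurableSet A)
    (hAfin : volume A ≠ ∞) (hB : MeasurableSet B) (hBfin : volume B ≠ ∞) (hv : Orthonormal ℂ v)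
    (hvA : ∀ i, v i ∈ Lp.supported ℂ ℂ 2 volume A)
    (hvB : ∀ i, 𝓕 (v i) ∈ Lp.supported ℂ ℂ 2 volume B) :
    (Fintype.card κ : ℝ) ≤ volume.real A * volume.real B := by
  have hint : ∀ i, Integrable fun ω => ‖𝓕 (v i) ω‖ ^ 2 := fun i => by
    simpa using (Lp.memLp (𝓕 (v i))).integrable_norm_rpow two_ne_zero ENNReal.ofNat_ne_top
  have hbound : ∀ᵐ ω, ∑ i, ‖𝓕 (v i) ω‖ ^ 2 ≤ B.indicator (fun _ => volume.real A) ω := by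
    filter_upwards [h𝓕.ae_sum_norm_sq_le hA hAfin hv hvA, ae_all_iff.mpr hvB] with ω hle hzero
    by_cases hω : ω ∈ B
    · simpa [hω] using hle
    · simp [hω, hzero _ hω]
  calc (Fintype.card κ : ℝ) = ∑ i, ∫ ω, ‖𝓕 (v i) ω‖ ^ 2 := by
        simp [L2.integral_norm_sq_eq_norm_sq (𝕜 := ℂ), hv.1]
    _ = ∫ ω, ∑ i, ‖𝓕 (v i) ω‖ ^ 2 := (integral_finsetSum _ fun i _ => hint i).symm
    _ ≤ ∫ ω, B.indicator (fun _ => volume.real A) ω :=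
        integral_mono_ae (integrable_finsetSum _ fun i _ => hint i)
          ((integrableOn_const hBfin).integrable_indicator hB) hbound
    _ = volume.real A * volume.real B := by
        rw [integral_indicator_const _ hB, smul_eq_mul, mul_comm]

lemma card_le_of_linearIndependent (h𝓕 : IsFourierPlancherel 𝓕) (hA : MeasurableSet A)
    (hAfin : volume A ≠ ∞) (hB : MeasurableSet B) (hBfin : volume B ≠ ∞) {N : ℕ}
    {G : Fin N → L²(ι)} (hG : LinearIndependent ℂ G)
    (hGA : ∀ j, G j ∈ Lp.supported ℂ ℂ 2 volume A)
    (hGB : ∀ j, 𝓕 (G j) ∈ Lp.supported ℂ ℂ 2 volume B) :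
    (N : ℝ) ≤ volume.real A * volume.real B := by
  set W := Lp.supported ℂ ℂ 2 volume A ⊓
    (Lp.supported ℂ ℂ 2 volume B).comap (𝓕 : L²(ι) →ₗ[ℂ] L²(ι))
  have hspan : Submodule.span ℂ (range (gramSchmidtNormed ℂ G)) ≤ W := by
    rw [span_gramSchmidtNormed_range, span_gramSchmidt, Submodule.span_le]
    exact range_subset_iff.mpr fun j => ⟨hGA j, hGB j⟩
  have hmem : ∀ i, gramSchmidtNormed ℂ G i ∈ W := fun i =>
    hspan (Submodule.subset_span (mem_range_self i))
  simpa using h𝓕.card_le_of_orthonormal hA hAfin hB hBfin (gramSchmidtNormed_orthonormal hG)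
    (fun i => (hmem i).1) (fun i => (hmem i).2)

lemma coeFn_translate_nsmul (h𝓕 : IsFourierPlancherel 𝓕) {g : L²(ι)} (hg : Integrable g)
    (a : ι → ℝ) (j : ℕ) :
    𝓕 (translate (j • a) g) =ᵐ[volume] fun ω => fourierKernel a ω ^ j * 𝓕 g ω := by
  simpa only [fourierKernel_nsmul] using h𝓕.coeFn_translate hg (j • a)

lemma linearIndependent_translate_nsmul (h𝓕 : IsFourierPlancherel 𝓕) {g : L²(ι)}
    (hgint : Integrable g) (hg : g ≠ 0) {a : ι → ℝ} (ha : a ≠ 0) :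
    LinearIndependent ℂ fun j : ℕ => translate (j • a) g :=
  .of_comp (𝓕 : L²(ι) →ₗ[ℂ] L²(ι)) <|
    Lp.linearIndependent_of_coeFn_eq_pow_mul (h𝓕.coeFn_translate_nsmul hgint a)
      (fun h => hg (𝓕.map_eq_zero_iff.mp (Lp.eq_zero_iff_ae_eq_zero.mpr h)))
      (volume_setOf_fourierKernel_eq ha)

theorem eq_zero_of_volume_ne_top [Nonempty ι] (h𝓕 : IsFourierPlancherel 𝓕) {g : L²(ι)}
    (hA : MeasurableSet A) (hAfin : volume A ≠ ∞) (hB : MeasurableSet B) (hBfin : volume B ≠ ∞)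
    (hgA : g ∈ Lp.supported ℂ ℂ 2 volume A) (hgB : 𝓕 g ∈ Lp.supported ℂ ℂ 2 volume B) :
    g = 0 := by
  by_contra hg
  have hgint := Lp.integrable_of_mem_supported hAfin hgA
  obtain ⟨N, hN⟩ := exists_nat_gt ((volume.real A + 1) * volume.real B)
  obtain ⟨a, ha, hA'⟩ :=
    exists_ne_zero_measure_biUnion_preimage_nsmul_sub_lt hA.nullMeasurableSet hAfin N one_pos
  set A' := ⋃ j ∈ Finset.range N, (fun x => x - j • a) ⁻¹' A
  have hA'm : MeasurableSet A' :=
    Finset.measurableSet_biUnion _ fun j _ => hA.preimage (measurable_sub_const _)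
  have hA'fin : volume A' ≠ ∞ := (hA'.trans (ENNReal.add_lt_top.mpr ⟨hAfin.lt_top, by simp⟩)).ne
  have hA'real : volume.real A' ≤ volume.real A + 1 := by
    simpa [measureReal_def, ENNReal.toReal_add hAfin] using
      ENNReal.toReal_mono (ENNReal.add_ne_top.mpr ⟨hAfin, ENNReal.one_ne_top⟩) hA'.le
  have hGA (j : Fin N) : translate ((j : ℕ) • a) g ∈ Lp.supported ℂ ℂ 2 volume A' :=
    Lp.supported_mono (subset_biUnion_of_mem (Finset.mem_coe.mpr (Finset.mem_range.mpr j.2)))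
      (translate_mem_supported hgA _)
  have hGB (j : Fin N) : 𝓕 (translate ((j : ℕ) • a) g) ∈ Lp.supported ℂ ℂ 2 volume B := by
    rw [Lp.mem_supported_iff]
    filter_upwards [h𝓕.coeFn_translate_nsmul hgint a j, hgB] with ω h1 h2 hωB
    rw [h1, h2 hωB, mul_zero]
  have hN_le := h𝓕.card_le_of_linearIndependent hA'm hA'fin hB hBfin
    ((h𝓕.linearIndependent_translate_nsmul hgint hg ha).comp Fin.val Fin.val_injective) hGA hGB
  have := mul_le_mul_of_nonneg_right hA'real (measureReal_nonneg : 0 ≤ volume.real B)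
  linarith

theorem eq_zero_of_volume_mul_lt_top [Nonempty ι] (h𝓕 : IsFourierPlancherel 𝓕) {g : L²(ι)}
    (hA : MeasurableSet A) (hB : MeasurableSet B) (hAB : volume A * volume B < ∞)
    (hgA : g ∈ Lp.supported ℂ ℂ 2 volume A) (hgB : 𝓕 g ∈ Lp.supported ℂ ℂ 2 volume B) :
    g = 0 := by
  rcases ENNReal.mul_lt_top_iff.mp hAB with ⟨hAfin, hBfin⟩ | hA0 | hB0
  · exact h𝓕.eq_zero_of_volume_ne_top hA hAfin.ne hB hBfin.ne hgA hgB
  · exact Lp.eq_zero_of_mem_supported hA0 hgA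
  · exact 𝓕.map_eq_zero_iff.mp (Lp.eq_zero_of_mem_supported hB0 hgB)

end IsFourierPlancherel

end Benedicks

theorem rihaczek_quadratic_benedicks_general (d : ℕ) (hd : 1 ≤ d)
    (f : (Fin d → ℝ) → ℂ) (hf : MemLp f 2 volume)
    (𝓕 : Lp ℂ 2 (volume : Measure (Fin d → ℝ)) ≃ₗᵢ[ℂ]
      Lp ℂ 2 (volume : Measure (Fin d → ℝ)))
    (h𝓕 : ∀ (φ : (Fin d → ℝ) → ℂ),
      Integrable φ volume → ∀ (hφ2 : MemLp φ 2 volume),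
      ⇑(𝓕 (hφ2.toLp φ)) =ᵐ[volume] fun ω : Fin d → ℝ =>
        ∫ t : Fin d → ℝ, φ t *
          Complex.exp (-2 * (Real.pi : ℂ) * Complex.I * ((∑ j, t j * ω j : ℝ) : ℂ)))
    (S : Set ((Fin d → ℝ) × (Fin d → ℝ))) (hSfin : volume S < ⊤)
    (hsupp : ∀ᵐ p : (Fin d → ℝ) × (Fin d → ℝ) ∂volume, p ∉ S →
      Complex.exp (-2 * (Real.pi : ℂ) * Complex.I * ((∑ j, p.1 j * p.2 j : ℝ) : ℂ)) *
        f p.1 * conj (⇑(𝓕 (hf.toLp f)) p.2) = 0) :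
    f =ᵐ[volume] 0 := by
  have : Nonempty (Fin d) := ⟨⟨0, hd⟩⟩
  set g := hf.toLp f
  obtain ⟨A, hAm, hA⟩ := hf.aestronglyMeasurable.exists_measurableSet_ae_mem_iff_ne_zero
  obtain ⟨B, hBm, hB⟩ := (Lp.aestronglyMeasurable (𝓕 g)).exists_measurableSet_ae_mem_iff_ne_zero
  have hAB : volume A * volume B < ∞ := by
    refine lt_of_le_of_lt (Measure.mul_le_prod_of_ae_mul_eq_zero (w := fun ω => conj (𝓕 g ω))
      (by filter_upwards [hA] with x hx using hx.mp)
      (by filter_upwards [hB] with ω hω using fun h => by simpa using hω.mp h) ?_) hSfin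
    filter_upwards [hsupp] with p hp hpS
    exact (mul_eq_zero.mp (mul_assoc _ _ (conj (𝓕 g p.2)) ▸ hp hpS)).resolve_left (exp_ne_zero _)
  have hgA : g ∈ Lp.supported ℂ ℂ 2 volume A := by
    filter_upwards [hf.coeFn_toLp, hA] with x hgx hx hxA
    rw [hgx]
    exact not_not.mp (mt hx.mpr hxA)
  have hgB : 𝓕 g ∈ Lp.supported ℂ ℂ 2 volume B := by
    filter_upwards [hB] with ω hω hωB
    exact not_not.mp (mt hω.mpr hωB)
  have hg := Benedicks.IsFourierPlancherel.eq_zero_of_volume_mul_lt_top h𝓕 hAm hBm hAB hgA hgB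
  exact hf.coeFn_toLp.symm.trans (Lp.eq_zero_iff_ae_eq_zero.mp hg)

/-- **Benedicks's uncertainty principle for the quadratic Rihaczek
distribution.** If `R(f,f)(x,ω) = e^{−2πi x·ω} f(x) conj(𝓕f(ω))` is supported on a set of
finite measure, then `f = 0` a.e. Here `𝓕` is the Fourier–Plancherel transform on `L²(ℝ^d)`,
characterized as the unitary operator extending the Fourier integral on `L¹ ∩ L²`. -/
theorem rihaczek_quadratic_benedicks (d : ℕ) (hd : 1 ≤ d)
    (f : (Fin d → ℝ) → ℂ) (hf : MemLp f 2 volume)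
    (𝓕 : Lp ℂ 2 (volume : Measure (Fin d → ℝ)) ≃ₗᵢ[ℂ]
      Lp ℂ 2 (volume : Measure (Fin d → ℝ)))
    (h𝓕 : ∀ (φ : (Fin d → ℝ) → ℂ),
      Integrable φ volume → ∀ (hφ2 : MemLp φ 2 volume),
      ⇑(𝓕 (hφ2.toLp φ)) =ᵐ[volume] fun ω : Fin d → ℝ =>
        ∫ t : Fin d → ℝ, φ t *
          Complex.exp (-2 * (Real.pi : ℂ) * Complex.I * ((∑ j, t j * ω j : ℝ) : ℂ)))
    (S : Set ((Fin d → ℝ) × (Fin d → ℝ))) (hSm : MeasurableSet S) (hSfin : volume S < ⊤)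
    (hsupp : ∀ᵐ p : (Fin d → ℝ) × (Fin d → ℝ) ∂volume, p ∉ S →
      Complex.exp (-2 * (Real.pi : ℂ) * Complex.I * ((∑ j, p.1 j * p.2 j : ℝ) : ℂ)) *
        f p.1 * conj (⇑(𝓕 (hf.toLp f)) p.2) = 0) :
    f =ᵐ[volume] 0 :=
  rihaczek_quadratic_benedicks_general d hd f hf 𝓕 h𝓕 S hSfin hsupp
end

section
/- Let d ≥ 1, 1 ≤ k ≤ d, let Γ₁ ∈ ℝ^{k×k} be diagonal with strictly positive diagonal entries, and let Γ = [[Γ₁, 0],[0, 0]] ∈ ℝ^{d×d}. Let f₁, g₁ ∈ L¹(ℝ^d) ∩ L²(ℝ^d). Define g₂(ω) = ∫_{ℝ^d} g₁(y) e^{−2πi y·ω} dy and, for t ∈ ℝ^k and ω₂ ∈ ℝ^{d−k}, f₂(t, ω₂) = ∫_{ℝ^{d−k}} f₁(Γ₁⁻¹ t, x₂) e^{−2πi ω₂·x₂} dx₂ (defined for almost every t). Then for every ω₁, ξ₁ ∈ ℝ^k and ω₂, ξ₂ ∈ ℝ^{d−k}: ∫_{ℝ^d}∫_{ℝ^d}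 e^{2πi (Γx)·y} f₁(x) conj(g₁(y)) e^{−2πi((Γ₁ω₁)·x₁ + ω₂·x₂ + ξ₁·y₁ + ξ₂·y₂)} dx dy = |det Γ₁|⁻¹ ∫_{ℝ^k} f₂(t, ω₂) conj(g₂(t − ξ₁, −ξ₂)) e^{−2πi ω₁·t} dt, where x = (x₁, x₂), y = (y₁, y₂) ∈ ℝ^k × ℝ^{d−k}. -/
/-! The inner `y`-integral is the conjugate of the Fourier transform `g₂` evaluated at
`(Γ₁x₁ - ξ₁, -ξ₂)`. Since `g₁ ∈ L¹`, `g₂` is bounded and continuous, so the remaining integrand is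
integrable and Fubini splits `x = (x₁, x₂)`. The `x₂`-integral is `f₂(Γ₁x₁, ω₂)`, and the
substitution `t = Γ₁x₁` produces the factor `|det Γ₁|⁻¹`. -/

open MeasureTheory
open scoped ComplexConjugate
open Matrix FourierTransform

section FourierChar

open Complex Real

theorem exp_two_pi_I_mul_eq_fourierChar (r : ℝ) :
    exp (2 * (π : ℂ) * I * (r : ℂ)) = 𝐞 r := by
  rw [fourierChar_apply]; push_cast; ring_nf

theorem exp_neg_two_pi_I_mul_eq_fourierChar_neg (r : ℝ) :
    exp (-2 * (π : ℂ) * I * (r : ℂ)) = 𝐞 (-r) := by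
  rw [fourierChar_apply]; push_cast; ring_nf

theorem conj_fourierChar (r : ℝ) : conj (𝐞 r : ℂ) = 𝐞 (-r) := by
  rw [← Circle.coe_inv_eq_conj, AddChar.map_neg_eq_inv]

theorem coe_fourierChar_add (a b : ℝ) : (𝐞 (a + b) : ℂ) = 𝐞 a * 𝐞 b := by
  rw [AddChar.map_add_eq_mul, Circle.coe_mul]

end FourierChar

section ChangeOfVariables

variable {E F : Type*} [NormedAddCommGroup E] [NormedSpace ℝ E] [MeasurableSpace E] [BorelSpace E]
  [FiniteDimensional ℝ E] [NormedAddCommGroup F] [NormedSpace ℝ F]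

theorem integral_comp_linearMap (μ : Measure E) [μ.IsAddHaarMeasure] {f : E →ₗ[ℝ] E}
    (hf : LinearMap.det f ≠ 0) (g : E → F) :
    ∫ x, g (f x) ∂μ = |(LinearMap.det f)⁻¹| • ∫ y, g y ∂μ := by
  let e := (f.equivOfDetNeZero hf).toContinuousLinearEquiv.toHomeomorph.toMeasurableEquiv
  have he : Measure.map e μ = Measure.map f μ := rfl
  change ∫ x, g (e x) ∂μ = _
  rw [← integral_map_equiv e g, he, Measure.map_linearMap_addHaar_eq_smul_addHaar μ hf,
    integral_smul_measure, ENNReal.toReal_ofReal (abs_nonneg _)]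

theorem integral_comp_mul_left_pi {ι : Type*} [Fintype ι] {γ : ι → ℝ} (hγ : ∀ i, γ i ≠ 0)
    (g : (ι → ℝ) → F) :
    ∫ u : ι → ℝ, g (fun i => γ i * u i) = |∏ i, γ i|⁻¹ • ∫ t, g t := by
  classical
  have hdet : LinearMap.det (toLin' (diagonal γ)) = ∏ i, γ i := by
    rw [LinearMap.det_toLin', det_diagonal]
  have hlin := integral_comp_linearMap volume (hdet ▸ Finset.prod_ne_zero_iff.2 fun i _ => hγ i) g
  have hdiag : ∀ u, toLin' (diagonal γ) u = fun i => γ i * u i := fun u =>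
    funext (mulVec_diagonal γ u)
  simpa only [hdiag, hdet, abs_inv] using hlin

end ChangeOfVariables

section Fourier

variable {ι κ : Type*} [Fintype ι] [Fintype κ]

variable (ι κ) in
def prodDotProductBilin : ((ι → ℝ) × (κ → ℝ)) →ₗ[ℝ] ((ι → ℝ) × (κ → ℝ)) →ₗ[ℝ] ℝ :=
  (dotProductBilin ℝ ℝ).compl₁₂ (LinearMap.fst ℝ _ _) (LinearMap.fst ℝ _ _) +
    (dotProductBilin ℝ ℝ).compl₁₂ (LinearMap.snd ℝ _ _) (LinearMap.snd ℝ _ _)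

@[simp]
theorem prodDotProductBilin_apply (y ω : (ι → ℝ) × (κ → ℝ)) :
    prodDotProductBilin ι κ y ω = y.1 ⬝ᵥ ω.1 + y.2 ⬝ᵥ ω.2 := rfl

theorem continuous_prodDotProductBilin :
    Continuous fun p : ((ι → ℝ) × (κ → ℝ)) × ((ι → ℝ) × (κ → ℝ)) =>
      prodDotProductBilin ι κ p.1 p.2 := by
  simp only [prodDotProductBilin_apply, dotProduct]
  fun_prop

theorem VectorFourier.conj_fourierIntegral_fourierChar {V W : Type*} [AddCommGroup V] [Module ℝ V]
    [MeasurableSpace V] [AddCommGroup W] [Module ℝ W] (μ : Measure V) (L : V →ₗ[ℝ] W →ₗ[ℝ] ℝ)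
    (f : V → ℂ) (w : W) :
    conj (VectorFourier.fourierIntegral 𝐞 μ L f w) = ∫ v, 𝐞 (L v w) * conj (f v) ∂μ := by
  rw [VectorFourier.fourierIntegral, ← integral_conj]
  simp_rw [Circle.smul_def, smul_eq_mul, map_mul, conj_fourierChar, neg_neg]

theorem integrable_mul_fourierChar_mul_conj_fourierIntegral {X V W : Type*} [TopologicalSpace X]
    [MeasurableSpace X] [OpensMeasurableSpace X] {μ : Measure X} [AddCommGroup V] [Module ℝ V]
    [MeasurableSpace V] [TopologicalSpace V] [BorelSpace V] [AddCommGroup W] [Module ℝ W]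
    [TopologicalSpace W] [FirstCountableTopology W] {ν : Measure V} {L : V →ₗ[ℝ] W →ₗ[ℝ] ℝ}
    (hL : Continuous fun p : V × W => L p.1 p.2) {g : V → ℂ} (hg : Integrable g ν)
    {f : X → ℂ} (hf : Integrable f μ) {φ : X → ℝ} (hφ : Continuous φ) {ψ : X → W}
    (hψ : Continuous ψ) :
    Integrable (fun x => f x * 𝐞 (φ x) * conj (VectorFourier.fourierIntegral 𝐞 ν L g (ψ x))) μ := by
  have hĝ := VectorFourier.fourierIntegral_continuous Real.continuous_fourierChar hL hg
  refine (hf.mul_bdd ?_ (ae_of_all _ fun x => (Circle.norm_coe _).le)).mul_bdd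
    (c := ∫ v, ‖g v‖ ∂ν) ?_ (ae_of_all _ fun x => ?_)
  · exact (continuous_subtype_val.comp (Real.continuous_fourierChar.comp hφ)).aestronglyMeasurable
  · exact (Complex.continuous_conj.comp (hĝ.comp hψ)).aestronglyMeasurable
  · rw [RCLike.norm_conj]
    exact VectorFourier.norm_fourierIntegral_le_integral_norm _ _ _ _ _

theorem integral_chirp_mul_conj (g : (ι → ℝ) × (κ → ℝ) → ℂ) (c : ℂ) (a : ℝ) (v ξ₁ : ι → ℝ)
    (ξ₂ : κ → ℝ) :
    ∫ y, 𝐞 (v ⬝ᵥ y.1) * c * conj (g y) * 𝐞 (-(a + ξ₁ ⬝ᵥ y.1 + ξ₂ ⬝ᵥ y.2)) =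
      c * 𝐞 (-a) *
        conj (VectorFourier.fourierIntegral 𝐞 volume (prodDotProductBilin ι κ) g (v - ξ₁, -ξ₂)) := by
  rw [VectorFourier.conj_fourierIntegral_fourierChar, ← integral_const_mul]
  congr 1 with y
  have hphase : (𝐞 (v ⬝ᵥ y.1) : ℂ) * 𝐞 (-(a + ξ₁ ⬝ᵥ y.1 + ξ₂ ⬝ᵥ y.2)) =
      𝐞 (-a) * 𝐞 (prodDotProductBilin ι κ y (v - ξ₁, -ξ₂)) := by
    rw [← coe_fourierChar_add, ← coe_fourierChar_add, prodDotProductBilin_apply, dotProduct_sub,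
      dotProduct_neg, dotProduct_comm y.1 v, dotProduct_comm y.1 ξ₁, dotProduct_comm y.2]
    ring_nf
  linear_combination c * conj (g y) * hphase

theorem integral_mul_fourierChar_neg_add_mul {Y : Type*} [MeasurableSpace Y] (μ : Measure Y)
    (h : Y → ℂ) (a : ℝ) (b : Y → ℝ) (c : ℂ) :
    ∫ y, h y * 𝐞 (-(a + b y)) * c ∂μ = (∫ y, h y * 𝐞 (-b y) ∂μ) * c * 𝐞 (-a) := by
  rw [← integral_mul_const, ← integral_mul_const]
  congr 1 with y
  rw [neg_add, coe_fourierChar_add]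
  ring

end Fourier

theorem chirp_integral_eq_partial_stft_general (k m : ℕ)
    (γ : Fin k → ℝ) (hγ : ∀ j, 0 < γ j)
    (f₁ g₁ : (Fin k → ℝ) × (Fin m → ℝ) → ℂ)
    (hf₁i : Integrable f₁ volume)
    (hg₁i : Integrable g₁ volume)
    (g₂ : (Fin k → ℝ) × (Fin m → ℝ) → ℂ)
    (hg₂ : g₂ = fun ω => ∫ y : (Fin k → ℝ) × (Fin m → ℝ), g₁ y *
      Complex.exp (-2 * (Real.pi : ℂ) * Complex.I *
        (((∑ j, y.1 j * ω.1 j) + ∑ j, y.2 j * ω.2 j : ℝ) : ℂ)))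
    (f₂ : (Fin k → ℝ) × (Fin m → ℝ) → ℂ)
    (hf₂ : f₂ = fun t => ∫ x₂ : Fin m → ℝ, f₁ ((fun j => (γ j)⁻¹ * t.1 j), x₂) *
      Complex.exp (-2 * (Real.pi : ℂ) * Complex.I * ((∑ j, t.2 j * x₂ j : ℝ) : ℂ)))
    (ω₁ ξ₁ : Fin k → ℝ) (ω₂ ξ₂ : Fin m → ℝ) :
    (∫ x : (Fin k → ℝ) × (Fin m → ℝ), ∫ y : (Fin k → ℝ) × (Fin m → ℝ),
        Complex.exp (2 * (Real.pi : ℂ) * Complex.I * ((∑ j, γ j * x.1 j * y.1 j : ℝ) : ℂ)) *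
          f₁ x * conj (g₁ y) *
          Complex.exp (-2 * (Real.pi : ℂ) * Complex.I *
            (((∑ j, γ j * ω₁ j * x.1 j) + (∑ j, ω₂ j * x.2 j) +
              (∑ j, ξ₁ j * y.1 j) + ∑ j, ξ₂ j * y.2 j : ℝ) : ℂ))) =
      (((∏ j, γ j : ℝ) : ℂ))⁻¹ *
        ∫ t : Fin k → ℝ, f₂ (t, ω₂) * conj (g₂ (t - ξ₁, -ξ₂)) *
          Complex.exp (-2 * (Real.pi : ℂ) * Complex.I * ((∑ j, ω₁ j * t j : ℝ) : ℂ)) := by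
  obtain rfl : g₂ = VectorFourier.fourierIntegral 𝐞 volume (prodDotProductBilin _ _) g₁ := by
    ext ω
    simp only [hg₂, exp_neg_two_pi_I_mul_eq_fourierChar_neg, VectorFourier.fourierIntegral,
      Circle.smul_def, smul_eq_mul, mul_comm (g₁ _)]
    rfl
  subst hf₂
  simp only [exp_two_pi_I_mul_eq_fourierChar, exp_neg_two_pi_I_mul_eq_fourierChar_neg]
  set ĝ := VectorFourier.fourierIntegral 𝐞 volume (prodDotProductBilin (Fin k) (Fin m)) g₁
  set F : (Fin k → ℝ) → ℂ := fun t => (∫ x₂ : Fin m → ℝ, f₁ ((fun j => (γ j)⁻¹ * t j), x₂) *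
    𝐞 (-∑ j, ω₂ j * x₂ j)) * conj (ĝ (t - ξ₁, -ξ₂)) * 𝐞 (-∑ j, ω₁ j * t j)
  calc _ = ∫ x : (Fin k → ℝ) × (Fin m → ℝ),
        f₁ x * 𝐞 (-(∑ j, γ j * ω₁ j * x.1 j + ∑ j, ω₂ j * x.2 j)) *
          conj (ĝ ((fun j => γ j * x.1 j) - ξ₁, -ξ₂)) :=
        integral_congr_ae (ae_of_all _ fun x => integral_chirp_mul_conj _ _ _ _ _ _)
    _ = ∫ u : Fin k → ℝ, ∫ v : Fin m → ℝ,
        f₁ (u, v) * 𝐞 (-(∑ j, γ j * ω₁ j * u j + ∑ j, ω₂ j * v j)) *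
          conj (ĝ ((fun j => γ j * u j) - ξ₁, -ξ₂)) := by
      refine integral_prod _ (integrable_mul_fourierChar_mul_conj_fourierIntegral
        continuous_prodDotProductBilin hg₁i hf₁i ?_ ?_) <;> fun_prop
    _ = ∫ u : Fin k → ℝ, F (fun j => γ j * u j) := by
      refine integral_congr_ae (ae_of_all _ fun u => ?_)
      have hγu : (fun j => (γ j)⁻¹ * (γ j * u j)) = u :=
        funext fun j => inv_mul_cancel_left₀ (hγ j).ne' _
      have hphase : ∑ j, ω₁ j * (γ j * u j) = ∑ j, γ j * ω₁ j * u j :=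
        Finset.sum_congr rfl fun j _ => by ring
      simp only [integral_mul_fourierChar_neg_add_mul, F, hγu, hphase]
    _ = _ := by
      rw [integral_comp_mul_left_pi fun j => (hγ j).ne',
        abs_of_pos (Finset.prod_pos fun j _ => hγ j), Complex.real_smul, Complex.ofReal_inv]

/-- **key integral identity.** `ℝ^d = ℝ^k × ℝ^{d−k}` is modelled as
`(Fin k → ℝ) × (Fin m → ℝ)`; `Γ₁ = diag(γ)` with `γ_j > 0` and `Γ = [[Γ₁,0],[0,0]]`.
For `f₁, g₁ ∈ L¹ ∩ L²`, the chirped double Fourier integral of `f₁ ⊗ conj g₁` equals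
`|det Γ₁|⁻¹` times the partial short-time Fourier transform `V^k_{g₂} f₂ (ξ₁, ω₂, ω₁, ξ₂)`. -/
theorem chirp_integral_eq_partial_stft (k m : ℕ) (hk : 1 ≤ k)
    (γ : Fin k → ℝ) (hγ : ∀ j, 0 < γ j)
    (f₁ g₁ : (Fin k → ℝ) × (Fin m → ℝ) → ℂ)
    (hf₁i : Integrable f₁ volume) (hf₁2 : MemLp f₁ 2 volume)
    (hg₁i : Integrable g₁ volume) (hg₁2 : MemLp g₁ 2 volume)
    (g₂ : (Fin k → ℝ) × (Fin m → ℝ) → ℂ)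
    (hg₂ : g₂ = fun ω => ∫ y : (Fin k → ℝ) × (Fin m → ℝ), g₁ y *
      Complex.exp (-2 * (Real.pi : ℂ) * Complex.I *
        (((∑ j, y.1 j * ω.1 j) + ∑ j, y.2 j * ω.2 j : ℝ) : ℂ)))
    (f₂ : (Fin k → ℝ) × (Fin m → ℝ) → ℂ)
    (hf₂ : f₂ = fun t => ∫ x₂ : Fin m → ℝ, f₁ ((fun j => (γ j)⁻¹ * t.1 j), x₂) *
      Complex.exp (-2 * (Real.pi : ℂ) * Complex.I * ((∑ j, t.2 j * x₂ j : ℝ) : ℂ)))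
    (ω₁ ξ₁ : Fin k → ℝ) (ω₂ ξ₂ : Fin m → ℝ) :
    (∫ x : (Fin k → ℝ) × (Fin m → ℝ), ∫ y : (Fin k → ℝ) × (Fin m → ℝ),
        Complex.exp (2 * (Real.pi : ℂ) * Complex.I * ((∑ j, γ j * x.1 j * y.1 j : ℝ) : ℂ)) *
          f₁ x * conj (g₁ y) *
          Complex.exp (-2 * (Real.pi : ℂ) * Complex.I *
            (((∑ j, γ j * ω₁ j * x.1 j) + (∑ j, ω₂ j * x.2 j) +
              (∑ j, ξ₁ j * y.1 j) + ∑ j, ξ₂ j * y.2 j : ℝ) : ℂ))) =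
      (((∏ j, γ j : ℝ) : ℂ))⁻¹ *
        ∫ t : Fin k → ℝ, f₂ (t, ω₂) * conj (g₂ (t - ξ₁, -ξ₂)) *
          Complex.exp (-2 * (Real.pi : ℂ) * Complex.I * ((∑ j, ω₁ j * t j : ℝ) : ℂ)) :=
  chirp_integral_eq_partial_stft_general k m γ hγ f₁ g₁ hf₁i hg₁i g₂ hg₂ f₂ hf₂ ω₁ ξ₁ ω₂ ξ₂
end
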